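/- arXiv:1410.1176 — 7 statements merged into one kernel-verified Lean document; each statement's English description precedes it below -/
import Mathlib

section
/- Let N ≥ 2 and 0 < κ ≤ 1/4, and set α₊ = 1 + √(1 − 4κ). The function u(x) = x_N^{α₊/2}·|x|^{−(N + α₊ − 2)} satisfies −Δu(x) − κ·u(x)/x_N² = 0 at every point x of the open half-space ℝ^N_+ (this is the harmonicity of the Poisson kernel of the operator −Δ − κ/x_N² in the half-space with singularity at the origin). -/
/-!
For a linear form `ℓ`, the Hessian of `u = ℓ ^ p * ‖·‖ ^ q` on `{ℓ > 0}` follows from the product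
and chain rules; taking its trace for `ℓ = x_N` on `ℝ^N` gives
`Δu = p (p - 1) x_N^(p-2) |x|^q + q (2p + q + N - 2) x_N^p |x|^(q-2)`.
For `p = α₊/2` and `q = -(N + α₊ - 2)` the second coefficient vanishes, and `p = α₊/2` solves the
indicial equation `p (p - 1) + κ = 0`, so `Δu = -κ u / x_N²`.
-/

open MeasureTheory

/-- The Laplacian of `f` at `x`: the sum of the (pure) second partial derivatives. -/
noncomputable def laplacian {N : ℕ} (f : EuclideanSpace ℝ (Fin N) → ℝ)
    (x : EuclideanSpace ℝ (Fin N)) : ℝ :=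
  ∑ i : Fin N,
    iteratedFDeriv ℝ 2 f x ![EuclideanSpace.single i 1, EuclideanSpace.single i 1]

open Topology InnerProductSpace

theorem hasFDerivAt_norm_rpow_of_ne_zero {F : Type*} [NormedAddCommGroup F]
    [InnerProductSpace ℝ F] {x : F} (hx : x ≠ 0) (q : ℝ) :
    HasFDerivAt (fun y : F => ‖y‖ ^ q) ((q * ‖x‖ ^ (q - 2)) • innerSL ℝ x) x := by
  have hsq : ∀ y : F, ‖y‖ ^ q = (‖y‖ ^ 2) ^ (q / 2) := fun y => by
    rw [← Real.rpow_natCast, ← Real.rpow_mul (norm_nonneg y)]; ring_nf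
  have hpow : (‖x‖ ^ 2) ^ (q / 2 - 1) = ‖x‖ ^ (q - 2) := by
    rw [← Real.rpow_natCast, ← Real.rpow_mul (norm_nonneg x)]; ring_nf
  simp_rw [hsq]
  convert (hasStrictFDerivAt_norm_sq x).hasFDerivAt.rpow_const
    (Or.inl (pow_pos (norm_pos_iff.2 hx) 2).ne') (p := q / 2) using 1
  rw [hpow, two_nsmul, ← two_smul ℝ, smul_smul]; ring_nf

theorem iteratedFDeriv_two_apply_of_eventually_hasFDerivAt {𝕜 E G : Type*}
    [NontriviallyNormedField 𝕜] [NormedAddCommGroup E] [NormedSpace 𝕜 E]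
    [NormedAddCommGroup G] [NormedSpace 𝕜 G] {f : E → G} {f' : E → E →L[𝕜] G}
    {f'' : E →L[𝕜] E →L[𝕜] G} {x : E} (hf : ∀ᶠ y in 𝓝 x, HasFDerivAt f (f' y) y)
    (hf' : HasFDerivAt f' f'' x) (v w : E) :
    iteratedFDeriv 𝕜 2 f x ![v, w] = f'' v w := by
  have hderiv : fderiv 𝕜 f =ᶠ[𝓝 x] f' := hf.mono fun y hy => hy.fderiv
  rw [iteratedFDeriv_two_apply, hderiv.fderiv_eq, hf'.fderiv]
  rfl

section PowerTimesNormPower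

variable {F : Type*} [NormedAddCommGroup F] [InnerProductSpace ℝ F] (ℓ : F →L[ℝ] ℝ)
  (p q : ℝ) {x : F}

theorem ne_zero_of_apply_pos (hx : 0 < ℓ x) : x ≠ 0 := by
  rintro rfl; simp at hx

theorem hasFDerivAt_rpow_mul_norm_rpow (hx : 0 < ℓ x) :
    HasFDerivAt (fun y => ℓ y ^ p * ‖y‖ ^ q)
      (ℓ x ^ p • (q * ‖x‖ ^ (q - 2)) • innerSL ℝ x + ‖x‖ ^ q • (p * ℓ x ^ (p - 1)) • ℓ) x :=
  (ℓ.hasFDerivAt.rpow_const (Or.inl hx.ne')).mul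
    (hasFDerivAt_norm_rpow_of_ne_zero (ne_zero_of_apply_pos ℓ hx) q)

theorem iteratedFDeriv_two_rpow_mul_norm_rpow (hx : 0 < ℓ x) (v : F) :
    iteratedFDeriv ℝ 2 (fun y => ℓ y ^ p * ‖y‖ ^ q) x ![v, v] =
      p * (p - 1) * ℓ x ^ (p - 2) * ‖x‖ ^ q * ℓ v ^ 2
        + 2 * p * q * ℓ x ^ (p - 1) * ‖x‖ ^ (q - 2) * ℓ v * ⟪x, v⟫_ℝ
        + q * (q - 2) * ℓ x ^ p * ‖x‖ ^ (q - 4) * ⟪x, v⟫_ℝ ^ 2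
        + q * ℓ x ^ p * ‖x‖ ^ (q - 2) * ‖v‖ ^ 2 := by
  have hx0 := ne_zero_of_apply_pos ℓ hx
  have hf : ∀ᶠ y in 𝓝 x, HasFDerivAt (fun y => ℓ y ^ p * ‖y‖ ^ q)
      (ℓ y ^ p • (q * ‖y‖ ^ (q - 2)) • innerSL ℝ y + ‖y‖ ^ q • (p * ℓ y ^ (p - 1)) • ℓ) y :=
    ((ℓ.continuous.tendsto x).eventually (eventually_gt_nhds hx)).mono fun y hy =>
      hasFDerivAt_rpow_mul_norm_rpow ℓ p q hy
  have hf' := ((ℓ.hasFDerivAt.rpow_const (p := p) (Or.inl hx.ne')).smul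
      (((hasFDerivAt_norm_rpow_of_ne_zero hx0 (q - 2)).const_mul q).smul
        (innerSL ℝ (E := F)).hasFDerivAt)).add
    ((hasFDerivAt_norm_rpow_of_ne_zero hx0 q).smul
      (((ℓ.hasFDerivAt.rpow_const (p := p - 1) (Or.inl hx.ne')).const_mul p).smul_const ℓ))
  rw [iteratedFDeriv_two_apply_of_eventually_hasFDerivAt hf hf']
  simp only [add_apply, smul_apply, ContinuousLinearMap.smulRight_apply, Pi.smul_apply',
    smul_eq_mul]
  rw [innerSL_apply_apply, innerSL_apply_apply, real_inner_self_eq_norm_sq]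
  rw [show q - 2 - 2 = q - 4 by ring, show p - 1 - 1 = p - 2 by ring]
  ring

end PowerTimesNormPower

theorem laplacian_coord_rpow_mul_norm_rpow {N : ℕ} (n : Fin N) (p q : ℝ)
    {x : EuclideanSpace ℝ (Fin N)} (hx : 0 < x n) :
    laplacian (fun y => y n ^ p * ‖y‖ ^ q) x =
      p * (p - 1) * x n ^ (p - 2) * ‖x‖ ^ q
        + q * (2 * p + q + N - 2) * x n ^ p * ‖x‖ ^ (q - 2) := by
  have hx0 : 0 < ‖x‖ := norm_pos_iff.2 fun h => by simp [h] at hx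
  have hess := iteratedFDeriv_two_rpow_mul_norm_rpow (EuclideanSpace.proj n) p q hx
  simp only [PiLp.proj_apply] at hess
  simp only [laplacian, hess, EuclideanSpace.inner_single_right, PiLp.norm_single,
    PiLp.single_apply, Finset.sum_add_distrib]
  simp only [ite_pow, one_pow, ne_eq, OfNat.ofNat_ne_zero, not_false_eq_true, zero_pow, mul_ite,
    mul_one, mul_zero, Finset.sum_ite_eq, Finset.mem_univ, ↓reduceIte, Real.ringHom_apply, one_mul,
    ite_mul, zero_mul, ← Finset.mul_sum, ← EuclideanSpace.real_norm_sq_eq, norm_one,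
    Finset.sum_const, Finset.card_univ, Fintype.card_fin, nsmul_eq_mul]
  rw [show q - 4 = q - 2 - 2 by ring, Real.rpow_sub hx0 (q - 2) 2, Real.rpow_sub_one hx.ne' p,
    Real.rpow_two]
  field_simp
  ring

theorem half_one_add_sqrt_mul_sub_one {κ : ℝ} (hκ : κ ≤ 1 / 4) :
    (1 + √(1 - 4 * κ)) / 2 * ((1 + √(1 - 4 * κ)) / 2 - 1) = -κ := by
  have hsq := Real.sq_sqrt (by linarith : (0 : ℝ) ≤ 1 - 4 * κ)
  linear_combination hsq / 4

/-- the Poisson kernel `u(x) = x_N^{α₊/2} |x|^{-(N+α₊-2)}` of the Hardy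
operator `-Δ - κ/x_N²` is harmonic for this operator in the half-space `{x_N > 0}`. -/
theorem stmt_6 {N : ℕ} (hN : 2 ≤ N)
    (κ α : ℝ) (hκ1 : κ ≤ 1 / 4)
    (hα : α = 1 + Real.sqrt (1 - 4 * κ)) :
    ∀ x : EuclideanSpace ℝ (Fin N), 0 < x ⟨N - 1, by omega⟩ →
      -laplacian
          (fun y => (y ⟨N - 1, by omega⟩) ^ (α / 2) * ‖y‖ ^ (-((N : ℝ) + α - 2))) x
        - κ * ((x ⟨N - 1, by omega⟩) ^ (α / 2) * ‖x‖ ^ (-((N : ℝ) + α - 2)))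
            / (x ⟨N - 1, by omega⟩) ^ 2 = 0 := by
  intro x hx
  rw [laplacian_coord_rpow_mul_norm_rpow _ _ _ hx,
    show 2 * (α / 2) + -((N : ℝ) + α - 2) + N - 2 = 0 by ring, hα,
    half_one_add_sqrt_mul_sub_one hκ1, Real.rpow_sub hx, Real.rpow_two]
  field_simp
  ring
end

section
/- Let N ≥ 2, let Ω ⊂ ℝ^N be a bounded open set, let 0 < κ ≤ 1/4 and set α = α₊ = 1 + √(1 − 4κ). Then there exists a constant c > 0, depending only on N, κ and the diameter of Ω, such that for every boundary point ξ ∈ ∂Ω and every Borel set G ⊆ Ω one has ∫_G d(x)^α·|x − ξ|^{−(N + α − 2)} dx ≤ c·(∫_G d(x)^{α/2} dx)^{2/(N + α/2)}. -/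
/-
Split `G` at the radius `r` around `ξ`. Since `d(x) ≤ |x - ξ|`, near `ξ` the integrand is at most
`|x - ξ|^(2 - N)`, whose integral over `B(ξ, r)` is `C r²` by scaling; away from `ξ` it is at most
`r^(-(γ - 2)) d(x)^(α/2)` with `γ = N + α/2 ≥ 2`. Choosing `r = I^(1/γ)`, where
`I = ∫_G d^(α/2)`, makes both terms equal to `I^(2/γ)`.
-/

open MeasureTheory Metric Set Module

theorem rpow_mul_rpow_neg_le_rpow {d ρ α n : ℝ} (hd : 0 ≤ d) (hdρ : d ≤ ρ) (hα : 0 < α) :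
    d ^ α * ρ ^ (-(n + α - 2)) ≤ ρ ^ (2 - n) := by
  rcases (hd.trans hdρ).eq_or_lt with hρ | hρ
  · obtain rfl : d = 0 := le_antisymm (hρ ▸ hdρ) hd
    rw [Real.zero_rpow hα.ne', zero_mul]
    exact Real.rpow_nonneg (hd.trans hdρ) _
  calc d ^ α * ρ ^ (-(n + α - 2)) ≤ ρ ^ α * ρ ^ (-(n + α - 2)) := by gcongr
    _ = ρ ^ (2 - n) := by rw [← Real.rpow_add hρ]; ring_nf

theorem rpow_mul_rpow_neg_le_rpow_mul_rpow {d ρ α n r : ℝ} (hd : 0 ≤ d) (hdρ : d ≤ ρ) (hα : 0 < α)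
    (hγ : 2 ≤ n + α / 2) (hr : 0 < r) (hrρ : r ≤ ρ) :
    d ^ α * ρ ^ (-(n + α - 2)) ≤ r ^ (-(n + α / 2 - 2)) * d ^ (α / 2) := by
  have hρ : 0 < ρ := hr.trans_le hrρ
  calc d ^ α * ρ ^ (-(n + α - 2)) = d ^ (α / 2) * (d ^ (α / 2) * ρ ^ (-(n + α - 2))) := by
        rw [← mul_assoc, ← Real.rpow_add' hd (by positivity : α / 2 + α / 2 ≠ 0), add_halves]
    _ ≤ d ^ (α / 2) * (ρ ^ (α / 2) * ρ ^ (-(n + α - 2))) := by gcongr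
    _ = d ^ (α / 2) * ρ ^ (-(n + α / 2 - 2)) := by rw [← Real.rpow_add hρ]; ring_nf
    _ ≤ d ^ (α / 2) * r ^ (-(n + α / 2 - 2)) := by
        gcongr ?_ * ?_
        exact Real.rpow_le_rpow_of_nonpos hr hrρ (by linarith)
    _ = r ^ (-(n + α / 2 - 2)) * d ^ (α / 2) := mul_comm _ _

section
variable {E : Type*} [NormedAddCommGroup E] [NormedSpace ℝ E] [FiniteDimensional ℝ E]
  [MeasurableSpace E] [BorelSpace E] (μ : Measure E) [μ.IsAddHaarMeasure]

theorem lintegral_ball_norm_rpow (p : ℝ) {r : ℝ} (hr : 0 < r) :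
    ∫⁻ x in ball 0 r, ENNReal.ofReal (‖x‖ ^ p) ∂μ =
      ENNReal.ofReal (r ^ (finrank ℝ E + p)) * ∫⁻ x in ball 0 1, ENNReal.ofReal (‖x‖ ^ p) ∂μ := by
  have hf : Measurable fun x : E => ENNReal.ofReal (‖x‖ ^ p) := by fun_prop
  have hpre : (r • ·) ⁻¹' ball (0 : E) r = ball 0 1 := by
    ext x
    simp [norm_smul, abs_of_pos hr, hr]
  have hscale : ∀ x : E, ENNReal.ofReal (‖r • x‖ ^ p) =
      ENNReal.ofReal (r ^ p) * ENNReal.ofReal (‖x‖ ^ p) := fun x => by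
    rw [norm_smul, Real.norm_of_nonneg hr.le, Real.mul_rpow hr.le (norm_nonneg x),
      ENNReal.ofReal_mul (by positivity)]
  have key := setLIntegral_map (μ := μ) measurableSet_ball hf (measurable_const_smul r)
    (s := ball 0 r)
  rw [Measure.map_addHaar_smul μ hr.ne', Measure.restrict_smul, lintegral_smul_measure,
    hpre] at key
  simp only [hscale, lintegral_const_mul _ hf] at key
  have hrn : (0 : ℝ) < r ^ finrank ℝ E := by positivity
  rw [abs_of_pos (inv_pos.2 hrn), smul_eq_mul] at key
  rw [Real.rpow_add hr, Real.rpow_natCast, ENNReal.ofReal_mul hrn.le, mul_assoc, ← key,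
    ← mul_assoc, ← ENNReal.ofReal_mul hrn.le, mul_inv_cancel₀ hrn.ne', ENNReal.ofReal_one, one_mul]

theorem lintegral_unitBall_norm_rpow_lt_top (hE : 1 ≤ finrank ℝ E) {p : ℝ}
    (hp : -(finrank ℝ E : ℝ) < p) :
    ∫⁻ x in ball 0 1, ENNReal.ofReal (‖x‖ ^ p) ∂μ < ⊤ := by
  have hmeas : Measurable fun x : E => ‖x‖ ^ p := by fun_prop
  refine Integrable.lintegral_lt_top (integrableOn_ball_of_norm_le_rpow hE (α := -p) (C := 1)
    (by linarith) (Filter.Eventually.of_forall fun x => ?_) hmeas.aestronglyMeasurable)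
  simp [abs_of_nonneg (Real.rpow_nonneg (norm_nonneg x) p)]

theorem lintegral_ball_norm_sub_rpow (ξ : E) (p : ℝ) {r : ℝ} (hr : 0 < r) :
    ∫⁻ x in ball ξ r, ENNReal.ofReal (‖x - ξ‖ ^ p) ∂μ =
      ENNReal.ofReal (r ^ (finrank ℝ E + p)) * ∫⁻ x in ball 0 1, ENNReal.ofReal (‖x‖ ^ p) ∂μ := by
  have hpre : (· - ξ) ⁻¹' ball (0 : E) r = ball ξ r := by
    ext x
    simp [dist_eq_norm]
  rw [← hpre, (measurePreserving_sub_right μ ξ).setLIntegral_comp_preimage_emb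
    (MeasurableEquiv.subRight ξ).measurableEmbedding (fun y => ENNReal.ofReal (‖y‖ ^ p)),
    lintegral_ball_norm_rpow μ p hr]

theorem lintegral_rpow_mul_norm_sub_rpow_le {d : E → ℝ} {G : Set E} {ξ : E} {α r : ℝ}
    (hG : MeasurableSet G) (hd : ∀ x ∈ G, 0 ≤ d x) (hdξ : ∀ x ∈ G, d x ≤ ‖x - ξ‖) (hα : 0 < α)
    (hγ : 2 ≤ finrank ℝ E + α / 2) (hr : 0 < r) :
    ∫⁻ x in G, ENNReal.ofReal (d x ^ α * ‖x - ξ‖ ^ (-(finrank ℝ E + α - 2))) ∂μ ≤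
      ENNReal.ofReal (r ^ 2) *
          ∫⁻ x in ball 0 1, ENNReal.ofReal (‖x‖ ^ ((2 : ℝ) - finrank ℝ E)) ∂μ +
        ENNReal.ofReal (r ^ (-(finrank ℝ E + α / 2 - 2))) *
          ∫⁻ x in G, ENNReal.ofReal (d x ^ (α / 2)) ∂μ := by
  rw [← lintegral_inter_add_sdiff _ G (measurableSet_ball (x := ξ) (ε := r))]
  gcongr ?_ + ?_
  · calc ∫⁻ x in G ∩ ball ξ r, ENNReal.ofReal (d x ^ α * ‖x - ξ‖ ^ (-(finrank ℝ E + α - 2))) ∂μ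
        ≤ ∫⁻ x in G ∩ ball ξ r, ENNReal.ofReal (‖x - ξ‖ ^ ((2 : ℝ) - finrank ℝ E)) ∂μ :=
          setLIntegral_mono' (hG.inter measurableSet_ball) fun x hx =>
            ENNReal.ofReal_le_ofReal (rpow_mul_rpow_neg_le_rpow (hd x hx.1) (hdξ x hx.1) hα)
      _ ≤ ∫⁻ x in ball ξ r, ENNReal.ofReal (‖x - ξ‖ ^ ((2 : ℝ) - finrank ℝ E)) ∂μ :=
          lintegral_mono_set inter_subset_right
      _ = _ := by
          rw [lintegral_ball_norm_sub_rpow μ ξ _ hr, add_sub_cancel, Real.rpow_two]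
  · calc ∫⁻ x in G \ ball ξ r, ENNReal.ofReal (d x ^ α * ‖x - ξ‖ ^ (-(finrank ℝ E + α - 2))) ∂μ
        ≤ ∫⁻ x in G \ ball ξ r, ENNReal.ofReal (r ^ (-(finrank ℝ E + α / 2 - 2))) *
            ENNReal.ofReal (d x ^ (α / 2)) ∂μ := by
          refine setLIntegral_mono' (hG.diff measurableSet_ball) fun x hx => ?_
          rw [← ENNReal.ofReal_mul (by positivity)]
          refine ENNReal.ofReal_le_ofReal (rpow_mul_rpow_neg_le_rpow_mul_rpow (hd x hx.1)
            (hdξ x hx.1) hα hγ hr ?_)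
          simpa [dist_eq_norm] using hx.2
      _ = ENNReal.ofReal (r ^ (-(finrank ℝ E + α / 2 - 2))) *
            ∫⁻ x in G \ ball ξ r, ENNReal.ofReal (d x ^ (α / 2)) ∂μ :=
          lintegral_const_mul' _ _ ENNReal.ofReal_ne_top
      _ ≤ _ := by gcongr; exact sdiff_subset

end

open Filter Topology in
theorem le_add_one_mul_rpow_of_forall_pos {A K I : ENNReal} {γ : ℝ} (hK : K ≠ ⊤) (hγ : 0 < γ)
    (h : ∀ r : ℝ, 0 < r → A ≤ ENNReal.ofReal (r ^ 2) * K + ENNReal.ofReal (r ^ (-(γ - 2))) * I) :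
    A ≤ (K + 1) * I ^ (2 / γ) := by
  rcases eq_or_ne I 0 with rfl | hI0
  · have hlim : Tendsto (fun r : ℝ => ENNReal.ofReal (r ^ 2) * K) (𝓝[>] 0) (𝓝 0) := by
      have := ENNReal.Tendsto.mul_const
        ((ENNReal.continuous_ofReal.comp (continuous_pow 2)).tendsto 0) (Or.inr hK)
      simpa using this.mono_left nhdsWithin_le_nhds
    have hA : A ≤ 0 := ge_of_tendsto hlim
      (eventually_nhdsWithin_of_forall fun r hr => by simpa using h r hr)
    exact hA.trans zero_le
  rcases eq_or_ne I ⊤ with rfl | hItop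
  · simp [ENNReal.top_rpow_of_pos (div_pos two_pos hγ)]
  have hI : 0 < I.toReal := ENNReal.toReal_pos hI0 hItop
  have hpow : ∀ q : ℝ, ENNReal.ofReal ((I.toReal ^ γ⁻¹) ^ q) = I ^ (q / γ) := fun q => by
    rw [← Real.rpow_mul hI.le, ← ENNReal.ofReal_rpow_of_pos hI, ENNReal.ofReal_toReal hItop,
      inv_mul_eq_div]
  calc A ≤ ENNReal.ofReal ((I.toReal ^ γ⁻¹) ^ 2) * K +
        ENNReal.ofReal ((I.toReal ^ γ⁻¹) ^ (-(γ - 2))) * I := h _ (by positivity)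
    _ = (K + 1) * I ^ (2 / γ) := by
        have hexp : -(γ - 2) / γ + 1 = 2 / γ := by field_simp; ring
        have hmul : I ^ (-(γ - 2) / γ) * I = I ^ (2 / γ) := by
          rw [← hexp, ENNReal.rpow_add _ _ hI0 hItop, ENNReal.rpow_one]
        rw [← Real.rpow_two, hpow, hpow, hmul]
        ring

theorem infDist_compl_le_dist_of_mem_frontier {X : Type*} [MetricSpace X] {s : Set X} {x ξ : X}
    (hξ : ξ ∈ frontier s) : infDist x sᶜ ≤ dist x ξ := by
  rw [← infDist_closure]
  exact infDist_le_dist_of_mem (frontier_subset_closure (frontier_compl s ▸ hξ))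

theorem stmt_10_general {N : ℕ} (hN : 2 ≤ N)
    (Ω : Set (EuclideanSpace ℝ (Fin N)))
    (κ α : ℝ)
    (hα : α = 1 + Real.sqrt (1 - 4 * κ)) :
    ∃ c : ℝ, 0 < c ∧
      ∀ ξ ∈ frontier Ω, ∀ G : Set (EuclideanSpace ℝ (Fin N)),
        MeasurableSet G → G ⊆ Ω →
        ∫⁻ x in G,
            ENNReal.ofReal
              ((Metric.infDist x Ωᶜ) ^ α * ‖x - ξ‖ ^ (-((N : ℝ) + α - 2))) ≤
          ENNReal.ofReal c *
            (∫⁻ x in G, ENNReal.ofReal ((Metric.infDist x Ωᶜ) ^ (α / 2)))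
              ^ (2 / ((N : ℝ) + α / 2)) := by
  have hα0 : 0 < α := by rw [hα]; positivity
  have hdim : finrank ℝ (EuclideanSpace ℝ (Fin N)) = N := finrank_euclideanSpace_fin
  have hN' : (2 : ℝ) ≤ N := by exact_mod_cast hN
  set K := ∫⁻ x in ball (0 : EuclideanSpace ℝ (Fin N)) 1, ENNReal.ofReal (‖x‖ ^ (2 - (N : ℝ)))
  have hK : K ≠ ⊤ := (lintegral_unitBall_norm_rpow_lt_top volume (by omega)
    (by rw [hdim]; linarith)).ne
  refine ⟨K.toReal + 1, by positivity, fun ξ hξ G hG _ => ?_⟩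
  rw [ENNReal.ofReal_add ENNReal.toReal_nonneg zero_le_one, ENNReal.ofReal_toReal hK,
    ENNReal.ofReal_one]
  refine le_add_one_mul_rpow_of_forall_pos hK (by positivity) fun r hr => ?_
  have := lintegral_rpow_mul_norm_sub_rpow_le volume hG (fun x _ => infDist_nonneg)
    (fun x _ => (infDist_compl_le_dist_of_mem_frontier hξ).trans_eq (dist_eq_norm x ξ)) hα0
    (by rw [hdim]; linarith) hr
  rwa [hdim] at this

/-- the weighted potential estimate
`∫_G d(x)^α |x-ξ|^{-(N+α-2)} dx ≤ c (∫_G d(x)^{α/2} dx)^{2/(N+α/2)}`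
for boundary points `ξ` and Borel sets `G ⊆ Ω`. -/
theorem stmt_10 {N : ℕ} (hN : 2 ≤ N)
    (Ω : Set (EuclideanSpace ℝ (Fin N))) (hΩo : IsOpen Ω) (hΩb : Bornology.IsBounded Ω)
    (κ α : ℝ) (hκ0 : 0 < κ) (hκ1 : κ ≤ 1 / 4)
    (hα : α = 1 + Real.sqrt (1 - 4 * κ)) :
    ∃ c : ℝ, 0 < c ∧
      ∀ ξ ∈ frontier Ω, ∀ G : Set (EuclideanSpace ℝ (Fin N)),
        MeasurableSet G → G ⊆ Ω →
        ∫⁻ x in G,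
            ENNReal.ofReal
              ((Metric.infDist x Ωᶜ) ^ α * ‖x - ξ‖ ^ (-((N : ℝ) + α - 2))) ≤
          ENNReal.ofReal c *
            (∫⁻ x in G, ENNReal.ofReal ((Metric.infDist x Ωᶜ) ^ (α / 2)))
              ^ (2 / ((N : ℝ) + α / 2)) :=
  stmt_10_general hN Ω κ α hα
end

section
/- Let N ≥ 3, let Ω ⊂ ℝ^N be a bounded open set, let 0 < κ ≤ 1/4 and set α = α₊ = 1 + √(1 − 4κ). Define G̃(x, y) = min{ |x − y|^{2−N}, d(x)^{α/2}·d(y)^{α/2}·|x − y|^{2 − N − α} } for x ≠ y in Ω. Then there exists a constant c > 0, depending only on N, κ and the diameter of Ω, such that for every y ∈ Ω and every Borel set Θ ⊆ Ω one has ∫_Θ G̃(x, y)·d(x)^{α/2} dx ≤ c·d(y)^{α/2}·(∫_Θ d(x)^{α/2} dx)^{2/(N + α/2)}. -/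
/-!
Since `d(x) ≤ d(y) + |x - y|`, the integrand is at most `2^α d(y)^{α/2}` times the kernel
`min(|x - y|^{2-N}, d(x)^{α/2} |x - y|^{2-N-α/2})`. Split `Θ` at distance `ρ` from `y`: on the
ball the first entry of the min integrates to `C ρ²` (scaling), off the ball the second entry is at
most `ρ^{2-N-α/2} d(x)^{α/2}`, contributing `ρ^{2-N-α/2} t` with `t = ∫_Θ d^{α/2}`. The choice
`ρ^{N+α/2} = t` makes both terms equal to `t^{2/(N+α/2)}`.
-/

open MeasureTheory Metric Module
open scoped ENNReal

theorem min_rpow_mul_rpow_le {s α a b r : ℝ} (hs : s < 0) (hα : 0 ≤ α) (ha : 0 ≤ a) (hb : 0 ≤ b)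
    (hr : 0 ≤ r) (hab : a ≤ b + r) :
    min (r ^ s) (a ^ (α / 2) * b ^ (α / 2) * r ^ (s - α)) * a ^ (α / 2) ≤
      2 ^ α * b ^ (α / 2) * min (r ^ s) (a ^ (α / 2) * r ^ (s - α / 2)) := by
  rcases hr.eq_or_lt with rfl | hr
  · rw [Real.zero_rpow hs.ne, Real.zero_rpow (by linarith), Real.zero_rpow (by linarith)]
    simp
  have h2β : (2 : ℝ) ^ (α / 2) * 2 ^ (α / 2) = 2 ^ α := by
    rw [← Real.rpow_add two_pos]; ring_nf
  have h2 : (2 : ℝ) ^ (α / 2) ≤ 2 ^ α := Real.rpow_le_rpow_of_exponent_le one_le_two (by linarith)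
  have h1 : (1 : ℝ) ≤ 2 ^ α := Real.one_le_rpow one_le_two hα
  have hrβ : r ^ (α / 2) * r ^ (s - α / 2) = r ^ s := by
    rw [← Real.rpow_add hr]; ring_nf
  have hrα : r ^ (α / 2) * r ^ (s - α) = r ^ (s - α / 2) := by
    rw [← Real.rpow_add hr]; ring_nf
  have hpow : ∀ c, 0 ≤ c → a ≤ 2 * c → a ^ (α / 2) ≤ 2 ^ (α / 2) * c ^ (α / 2) := fun c hc hac => by
    rw [← Real.mul_rpow zero_le_two hc]
    exact Real.rpow_le_rpow ha hac (by linarith)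
  rw [mul_min_of_nonneg _ _ (by positivity)]
  rcases le_total r b with hrb | hbr
  · have haβ := hpow b hb (by linarith)
    refine (mul_le_mul_of_nonneg_right (min_le_left _ _) (by positivity)).trans (le_min ?_ ?_)
    · calc r ^ s * a ^ (α / 2) ≤ r ^ s * (2 ^ (α / 2) * b ^ (α / 2)) := by gcongr
        _ ≤ 2 ^ α * b ^ (α / 2) * r ^ s := by
            linarith [mul_le_mul_of_nonneg_right h2 (by positivity : 0 ≤ b ^ (α / 2) * r ^ s)]
    · calc r ^ s * a ^ (α / 2) = r ^ (α / 2) * r ^ (s - α / 2) * a ^ (α / 2) := by rw [hrβ]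
        _ ≤ b ^ (α / 2) * r ^ (s - α / 2) * a ^ (α / 2) := by gcongr
        _ ≤ 2 ^ α * b ^ (α / 2) * (a ^ (α / 2) * r ^ (s - α / 2)) := by
            linarith [mul_le_mul_of_nonneg_right h1
              (by positivity : 0 ≤ b ^ (α / 2) * r ^ (s - α / 2) * a ^ (α / 2))]
  · have haβ := hpow r hr.le (by linarith)
    refine (mul_le_mul_of_nonneg_right (min_le_right _ _) (by positivity)).trans (le_min ?_ ?_)
    · calc a ^ (α / 2) * b ^ (α / 2) * r ^ (s - α) * a ^ (α / 2)
          ≤ (2 ^ (α / 2) * r ^ (α / 2)) * b ^ (α / 2) * r ^ (s - α) *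
              (2 ^ (α / 2) * r ^ (α / 2)) := by
            gcongr
        _ = 2 ^ α * b ^ (α / 2) * r ^ s := by
            rw [← h2β, ← hrβ, ← hrα]; ring
    · calc a ^ (α / 2) * b ^ (α / 2) * r ^ (s - α) * a ^ (α / 2)
          ≤ a ^ (α / 2) * b ^ (α / 2) * r ^ (s - α) * (2 ^ (α / 2) * r ^ (α / 2)) := by gcongr
        _ = 2 ^ (α / 2) * b ^ (α / 2) * (a ^ (α / 2) * r ^ (s - α / 2)) := by rw [← hrα]; ring
        _ ≤ 2 ^ α * b ^ (α / 2) * (a ^ (α / 2) * r ^ (s - α / 2)) := by gcongr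

theorem eq_zero_of_forall_le_ofReal_rpow_mul {a K : ℝ≥0∞} {p : ℝ} (hp : 0 < p) (hK : K ≠ ∞)
    (h : ∀ ρ : ℝ, 0 < ρ → a ≤ ENNReal.ofReal (ρ ^ p) * K) : a = 0 := by
  have hpow : Filter.Tendsto (fun ρ : ℝ => ρ ^ p) (nhds 0) (nhds 0) := by
    simpa [Real.zero_rpow hp.ne'] using (Real.continuousAt_rpow_const 0 p (Or.inr hp.le)).tendsto
  have hlim : Filter.Tendsto (fun ρ : ℝ => ENNReal.ofReal (ρ ^ p) * K)
      (nhdsWithin 0 (Set.Ioi 0)) (nhds 0) := by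
    simpa using ENNReal.Tendsto.mul_const
      (ENNReal.tendsto_ofReal (hpow.mono_left nhdsWithin_le_nhds)) (Or.inr hK)
  refine nonpos_iff_eq_zero.1 (ge_of_tendsto hlim ?_)
  filter_upwards [self_mem_nhdsWithin] with ρ hρ using h ρ hρ

theorem ofReal_min_rpow_le_indicator_add {E : Type*} [SeminormedAddCommGroup E] {s β ρ : ℝ}
    (hρ : 0 < ρ) (hsβ : s - β ≤ 0) (y x : E) (w : ℝ) :
    ENNReal.ofReal (min (‖x - y‖ ^ s) (w * ‖x - y‖ ^ (s - β))) ≤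
      (ball y ρ).indicator (fun x => ENNReal.ofReal (‖x - y‖ ^ s)) x +
        ENNReal.ofReal (ρ ^ (s - β)) * ENNReal.ofReal w := by
  by_cases hx : x ∈ ball y ρ
  · rw [Set.indicator_of_mem hx]
    exact le_add_right (ENNReal.ofReal_le_ofReal (min_le_left _ _))
  · have hρx : ρ ≤ ‖x - y‖ := by simpa [dist_eq_norm] using hx
    rw [Set.indicator_of_notMem hx, zero_add]
    calc ENNReal.ofReal (min (‖x - y‖ ^ s) (w * ‖x - y‖ ^ (s - β)))
        ≤ ENNReal.ofReal (w * ‖x - y‖ ^ (s - β)) := ENNReal.ofReal_le_ofReal (min_le_right _ _)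
      _ = ENNReal.ofReal w * ENNReal.ofReal (‖x - y‖ ^ (s - β)) :=
          ENNReal.ofReal_mul' (by positivity)
      _ ≤ ENNReal.ofReal w * ENNReal.ofReal (ρ ^ (s - β)) :=
          mul_le_mul_right (ENNReal.ofReal_le_ofReal (Real.rpow_le_rpow_of_nonpos hρ hρx hsβ)) _
      _ = ENNReal.ofReal (ρ ^ (s - β)) * ENNReal.ofReal w := mul_comm _ _

theorem setLIntegral_min_infDist_rpow_le {E : Type*} [SeminormedAddCommGroup E]
    [MeasurableSpace E] (μ : Measure E) (S : Set E) {s α : ℝ} (hs : s < 0) (hα : 0 ≤ α)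
    (y : E) (Θ : Set E) :
    ∫⁻ x in Θ, ENNReal.ofReal (min (‖x - y‖ ^ s)
        (infDist x S ^ (α / 2) * infDist y S ^ (α / 2) * ‖x - y‖ ^ (s - α)) *
          infDist x S ^ (α / 2)) ∂μ ≤
      ENNReal.ofReal (2 ^ α * infDist y S ^ (α / 2)) *
        ∫⁻ x in Θ, ENNReal.ofReal
          (min (‖x - y‖ ^ s) (infDist x S ^ (α / 2) * ‖x - y‖ ^ (s - α / 2))) ∂μ := by
  have hy : 0 ≤ 2 ^ α * infDist y S ^ (α / 2) := by
    have := infDist_nonneg (x := y) (s := S); positivity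
  rw [← lintegral_const_mul' _ _ ENNReal.ofReal_ne_top]
  refine lintegral_mono fun x => ?_
  rw [← ENNReal.ofReal_mul hy]
  exact ENNReal.ofReal_le_ofReal (min_rpow_mul_rpow_le hs hα infDist_nonneg infDist_nonneg
    (norm_nonneg _) (dist_eq_norm x y ▸ infDist_le_infDist_add_dist))

section AddHaar

variable {E : Type*} [NormedAddCommGroup E] [NormedSpace ℝ E] [FiniteDimensional ℝ E]
  [MeasurableSpace E] [BorelSpace E] (μ : Measure E) [μ.IsAddHaarMeasure]

theorem lintegral_eq_ofReal_mul_lintegral_comp_smul (f : E → ℝ≥0∞) {R : ℝ} (hR : R ≠ 0) :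
    ∫⁻ x, f x ∂μ = ENNReal.ofReal |R ^ finrank ℝ E| * ∫⁻ x, f (R • x) ∂μ := by
  have hmap : ∫⁻ x, f (R • x) ∂μ = ∫⁻ x, f x ∂(Measure.map (R • ·) μ) :=
    (lintegral_map_equiv f (Homeomorph.smul (isUnit_iff_ne_zero.2 hR).unit).toMeasurableEquiv).symm
  rw [hmap, Measure.map_addHaar_smul μ hR, lintegral_smul_measure, smul_eq_mul, ← mul_assoc,
    ← ENNReal.ofReal_mul (abs_nonneg _), ← abs_mul, mul_inv_cancel₀ (pow_ne_zero _ hR),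
    abs_one, ENNReal.ofReal_one, one_mul]

theorem setLIntegral_ball_zero_norm_rpow (s : ℝ) {ρ : ℝ} (hρ : 0 < ρ) :
    ∫⁻ x in ball (0 : E) ρ, ENNReal.ofReal (‖x‖ ^ s) ∂μ =
      ENNReal.ofReal (ρ ^ (s + finrank ℝ E)) *
        ∫⁻ x in ball (0 : E) 1, ENNReal.ofReal (‖x‖ ^ s) ∂μ := by
  rw [← lintegral_indicator measurableSet_ball,
    lintegral_eq_ofReal_mul_lintegral_comp_smul μ _ hρ.ne',
    ← lintegral_indicator measurableSet_ball, ← lintegral_const_mul' _ _ ENNReal.ofReal_ne_top,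
    ← lintegral_const_mul' _ _ ENNReal.ofReal_ne_top]
  congr 1
  ext u
  have hmem : ρ • u ∈ ball (0 : E) ρ ↔ u ∈ ball (0 : E) 1 := by
    simp [norm_smul, abs_of_pos hρ, hρ]
  by_cases hu : u ∈ ball (0 : E) 1
  · rw [Set.indicator_of_mem (hmem.2 hu), Set.indicator_of_mem hu, norm_smul,
      Real.norm_of_nonneg hρ.le, Real.mul_rpow hρ.le (norm_nonneg _), Real.rpow_add hρ,
      Real.rpow_natCast, abs_of_pos (by positivity), ← ENNReal.ofReal_mul (by positivity),
      ← ENNReal.ofReal_mul (by positivity)]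
    ring_nf
  · rw [Set.indicator_of_notMem (mt hmem.1 hu), Set.indicator_of_notMem hu, mul_zero, mul_zero]

theorem setLIntegral_unitBall_norm_rpow_lt_top {s : ℝ} (hs : -(finrank ℝ E : ℝ) < s) :
    ∫⁻ x in ball (0 : E) 1, ENNReal.ofReal (‖x‖ ^ s) ∂μ < ∞ := by
  rcases le_or_gt 0 s with hs0 | hs0
  · calc ∫⁻ x in ball (0 : E) 1, ENNReal.ofReal (‖x‖ ^ s) ∂μ ≤ ∫⁻ _ in ball (0 : E) 1, 1 ∂μ :=
          setLIntegral_mono' measurableSet_ball fun x hx => ENNReal.ofReal_le_one.2 <|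
            Real.rpow_le_one (norm_nonneg x) (mem_ball_zero_iff.1 hx).le hs0
      _ < ∞ := by rw [setLIntegral_const, one_mul]; exact measure_ball_lt_top
  have hd : 1 ≤ finrank ℝ E := by
    have : (0 : ℝ) < finrank ℝ E := by linarith
    exact_mod_cast this
  refine Integrable.lintegral_lt_top (integrableOn_ball_of_norm_le_rpow hd (C := 1) (α := -s)
    (by linarith) (Filter.Eventually.of_forall fun x => ?_)
    (measurable_norm.pow_const s).aestronglyMeasurable)
  rw [neg_neg, one_mul, Real.norm_of_nonneg (by positivity)]

theorem setLIntegral_ball_norm_sub_rpow (y : E) (s : ℝ) {ρ : ℝ} (hρ : 0 < ρ) :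
    ∫⁻ x in ball y ρ, ENNReal.ofReal (‖x - y‖ ^ s) ∂μ =
      ENNReal.ofReal (ρ ^ (s + finrank ℝ E)) *
        ∫⁻ x in ball (0 : E) 1, ENNReal.ofReal (‖x‖ ^ s) ∂μ := by
  rw [← setLIntegral_ball_zero_norm_rpow μ s hρ]
  convert (measurePreserving_sub_right μ y).setLIntegral_comp_preimage_emb
    (measurableEmbedding_subRight y) (fun x => ENNReal.ofReal (‖x‖ ^ s)) (ball 0 ρ) using 3
  ext x
  simp [dist_eq_norm]

theorem setLIntegral_min_rpow_le_add {s β ρ : ℝ} (hρ : 0 < ρ) (hsβ : s - β ≤ 0) (y : E)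
    (w : E → ℝ) (Θ : Set E) :
    ∫⁻ x in Θ, ENNReal.ofReal (min (‖x - y‖ ^ s) (w x * ‖x - y‖ ^ (s - β))) ∂μ ≤
      ENNReal.ofReal (ρ ^ (s + finrank ℝ E)) *
          ∫⁻ x in ball (0 : E) 1, ENNReal.ofReal (‖x‖ ^ s) ∂μ +
        ENNReal.ofReal (ρ ^ (s - β)) * ∫⁻ x in Θ, ENNReal.ofReal (w x) ∂μ := by
  have hmeas : Measurable ((ball y ρ).indicator fun x => ENNReal.ofReal (‖x - y‖ ^ s)) :=
    (((measurable_id.sub_const y).norm.pow_const s).ennreal_ofReal).indicator measurableSet_ball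
  calc ∫⁻ x in Θ, ENNReal.ofReal (min (‖x - y‖ ^ s) (w x * ‖x - y‖ ^ (s - β))) ∂μ
      ≤ ∫⁻ x in Θ, ((ball y ρ).indicator (fun x => ENNReal.ofReal (‖x - y‖ ^ s)) x +
          ENNReal.ofReal (ρ ^ (s - β)) * ENNReal.ofReal (w x)) ∂μ :=
        lintegral_mono fun x => ofReal_min_rpow_le_indicator_add hρ hsβ y x (w x)
    _ = ∫⁻ x in Θ, (ball y ρ).indicator (fun x => ENNReal.ofReal (‖x - y‖ ^ s)) x ∂μ +
          ENNReal.ofReal (ρ ^ (s - β)) * ∫⁻ x in Θ, ENNReal.ofReal (w x) ∂μ := by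
        rw [lintegral_add_left hmeas, lintegral_const_mul' _ _ ENNReal.ofReal_ne_top]
    _ ≤ ∫⁻ x, (ball y ρ).indicator (fun x => ENNReal.ofReal (‖x - y‖ ^ s)) x ∂μ +
          ENNReal.ofReal (ρ ^ (s - β)) * ∫⁻ x in Θ, ENNReal.ofReal (w x) ∂μ := by
        gcongr
        exact Measure.restrict_le_self
    _ = _ := by
        rw [lintegral_indicator measurableSet_ball, setLIntegral_ball_norm_sub_rpow μ y s hρ]

theorem setLIntegral_min_rpow_le {s β : ℝ} (hs : s ≤ 0) (hsd : -(finrank ℝ E : ℝ) < s)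
    (hβ : 0 ≤ β) (y : E) (w : E → ℝ) (Θ : Set E) :
    ∫⁻ x in Θ, ENNReal.ofReal (min (‖x - y‖ ^ s) (w x * ‖x - y‖ ^ (s - β))) ∂μ ≤
      (∫⁻ x in ball (0 : E) 1, ENNReal.ofReal (‖x‖ ^ s) ∂μ + 1) *
        (∫⁻ x in Θ, ENNReal.ofReal (w x) ∂μ) ^ ((s + finrank ℝ E) / (finrank ℝ E + β)) := by
  set d : ℝ := (finrank ℝ E : ℝ)
  set K := ∫⁻ x in ball (0 : E) 1, ENNReal.ofReal (‖x‖ ^ s) ∂μ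
  set t := ∫⁻ x in Θ, ENNReal.ofReal (w x) ∂μ
  have hK : K ≠ ∞ := (setLIntegral_unitBall_norm_rpow_lt_top μ hsd).ne
  have hsβ : s - β ≤ 0 := by linarith
  have hdβ : 0 < d + β := by linarith
  have he : 0 < (s + d) / (d + β) := div_pos (by linarith) hdβ
  have hsplit : ∀ ρ : ℝ, 0 < ρ →
      ∫⁻ x in Θ, ENNReal.ofReal (min (‖x - y‖ ^ s) (w x * ‖x - y‖ ^ (s - β))) ∂μ ≤
        ENNReal.ofReal (ρ ^ (s + d)) * K + ENNReal.ofReal (ρ ^ (s - β)) * t :=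
    fun ρ hρ => setLIntegral_min_rpow_le_add μ hρ hsβ y w Θ
  rcases eq_or_ne t 0 with ht0 | ht0
  · rw [ht0, ENNReal.zero_rpow_of_pos he, mul_zero]
    exact (eq_zero_of_forall_le_ofReal_rpow_mul (p := s + d) (by linarith) hK fun ρ hρ => by
      simpa only [ht0, mul_zero, add_zero] using hsplit ρ hρ).le
  rcases eq_or_ne t ∞ with htop | htop
  · rw [htop, ENNReal.top_rpow_of_pos he, ENNReal.mul_top (by simp)]
    exact le_top
  set τ := t.toReal
  have hτ : 0 < τ := ENNReal.toReal_pos ht0 htop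
  have ht : t = ENNReal.ofReal τ := (ENNReal.ofReal_toReal htop).symm
  set ρ := τ ^ (d + β)⁻¹
  have hnear : ρ ^ (s + d) = τ ^ ((s + d) / (d + β)) := by
    rw [← Real.rpow_mul hτ.le]
    ring_nf
  have hfar : ρ ^ (s - β) * τ = τ ^ ((s + d) / (d + β)) := by
    rw [← Real.rpow_mul hτ.le, ← Real.rpow_add_one hτ.ne']
    congr 1
    field_simp
    ring
  calc _ ≤ ENNReal.ofReal (ρ ^ (s + d)) * K + ENNReal.ofReal (ρ ^ (s - β)) * t :=
        hsplit ρ (Real.rpow_pos_of_pos hτ _)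
    _ = (K + 1) * t ^ ((s + d) / (d + β)) := by
        rw [ht, ← ENNReal.ofReal_mul (by positivity), hnear, hfar,
          ENNReal.ofReal_rpow_of_pos hτ]
        ring

end AddHaar

theorem stmt_11_general {N : ℕ} (hN : 3 ≤ N)
    (Ω : Set (EuclideanSpace ℝ (Fin N)))
    (κ α : ℝ)
    (hα : α = 1 + Real.sqrt (1 - 4 * κ)) :
    ∃ c : ℝ, 0 < c ∧
      ∀ y ∈ Ω, ∀ Θ : Set (EuclideanSpace ℝ (Fin N)),
        MeasurableSet Θ → Θ ⊆ Ω →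
        ∫⁻ x in Θ,
            ENNReal.ofReal
              (min (‖x - y‖ ^ ((2 : ℝ) - N))
                  ((Metric.infDist x Ωᶜ) ^ (α / 2) * (Metric.infDist y Ωᶜ) ^ (α / 2)
                    * ‖x - y‖ ^ ((2 : ℝ) - N - α))
                * (Metric.infDist x Ωᶜ) ^ (α / 2)) ≤
          ENNReal.ofReal (c * (Metric.infDist y Ωᶜ) ^ (α / 2)) *
            (∫⁻ x in Θ, ENNReal.ofReal ((Metric.infDist x Ωᶜ) ^ (α / 2)))
              ^ (2 / ((N : ℝ) + α / 2)) := by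
  have hα0 : 0 ≤ α := by rw [hα]; positivity
  have hs : (2 : ℝ) - N < 0 := by
    have : (3 : ℝ) ≤ N := by exact_mod_cast hN
    linarith
  have hdim : finrank ℝ (EuclideanSpace ℝ (Fin N)) = N := finrank_euclideanSpace_fin
  set K := ∫⁻ x in ball (0 : EuclideanSpace ℝ (Fin N)) 1, ENNReal.ofReal (‖x‖ ^ ((2 : ℝ) - N))
  have hK : K ≠ ∞ := (setLIntegral_unitBall_norm_rpow_lt_top volume (by rw [hdim]; linarith)).ne
  refine ⟨2 ^ α * (K.toReal + 1), by positivity, fun y _ Θ _ _ => ?_⟩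
  have hpotential := setLIntegral_min_rpow_le volume hs.le (by rw [hdim]; linarith)
    (by linarith : 0 ≤ α / 2) y (fun x => infDist x Ωᶜ ^ (α / 2)) Θ
  rw [hdim, sub_add_cancel] at hpotential
  calc _ ≤ _ := (setLIntegral_min_infDist_rpow_le volume Ωᶜ hs hα0 y Θ).trans
        (mul_le_mul_right hpotential _)
    _ = _ := by
        rw [mul_right_comm (2 ^ α), ENNReal.ofReal_mul' (by positivity : (0 : ℝ) ≤ K.toReal + 1),
          ENNReal.ofReal_add ENNReal.toReal_nonneg zero_le_one, ENNReal.ofReal_toReal hK,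
          ENNReal.ofReal_one, mul_assoc]

/-- the weighted Green-potential estimate
`∫_Θ G̃(x,y) d(x)^{α/2} dx ≤ c d(y)^{α/2} (∫_Θ d(x)^{α/2} dx)^{2/(N+α/2)}`,
where `G̃(x,y) = min{|x-y|^{2-N}, d(x)^{α/2} d(y)^{α/2} |x-y|^{2-N-α}}` is the
two-sided comparison expression for the Green function of `-Δ - κ/d²`. -/
theorem stmt_11 {N : ℕ} (hN : 3 ≤ N)
    (Ω : Set (EuclideanSpace ℝ (Fin N))) (hΩo : IsOpen Ω) (hΩb : Bornology.IsBounded Ω)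
    (κ α : ℝ) (hκ0 : 0 < κ) (hκ1 : κ ≤ 1 / 4)
    (hα : α = 1 + Real.sqrt (1 - 4 * κ)) :
    ∃ c : ℝ, 0 < c ∧
      ∀ y ∈ Ω, ∀ Θ : Set (EuclideanSpace ℝ (Fin N)),
        MeasurableSet Θ → Θ ⊆ Ω →
        ∫⁻ x in Θ,
            ENNReal.ofReal
              (min (‖x - y‖ ^ ((2 : ℝ) - N))
                  ((Metric.infDist x Ωᶜ) ^ (α / 2) * (Metric.infDist y Ωᶜ) ^ (α / 2)
                    * ‖x - y‖ ^ ((2 : ℝ) - N - α))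
                * (Metric.infDist x Ωᶜ) ^ (α / 2)) ≤
          ENNReal.ofReal (c * (Metric.infDist y Ωᶜ) ^ (α / 2)) *
            (∫⁻ x in Θ, ENNReal.ofReal ((Metric.infDist x Ωᶜ) ^ (α / 2)))
              ^ (2 / ((N : ℝ) + α / 2)) :=
  stmt_11_general hN Ω κ α hα
end

section
/- Let N ≥ 2, let Ω ⊂ ℝ^N be a bounded open set, let 0 < κ ≤ 1/4 and set α = α₊ = 1 + √(1 − 4κ). For a finite positive Borel measure μ supported on ∂Ω define K̃[μ](x) = ∫_{∂Ω} d(x)^{α/2}·|x − ξ|^{−(N + α − 2)} dμ(ξ) for x ∈ Ω. Then there exists a constant c > 0, depending only on N, κ and the diameter of Ω, such that for every such μ and every s > 0 one has ∫_{{x ∈ Ω : K̃[μ](x) > s}} d(x)^{α/2} dx ≤ c·(μ(∂Ω)/s)^{(N + α/2)/(N − 2 + α/2)}. -/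
/-!
For `ξ ∈ ∂Ω` we have `d(x) ≤ |x - ξ|`, so the kernel `d(x)^{α/2} |x - ξ|^{-(N+α-2)}` is at most
`|x - ξ|^{-β}` with `β = N - 2 + α/2 > 0`. Its superlevel set at height `u` therefore lies in the
ball of radius `ρ = u^{-1/β}` around `ξ`, on which `d < ρ`; so it has `d^{α/2} dx`-measure at most
`|B₁| ρ^{N+α/2} = |B₁| u^{-p}` with `p = (N + α/2)/β > 1`, uniformly in `ξ`.

Such a uniform weak-`Lᵖ` bound passes to the `μ`-average of the kernels. Truncate every kernel at
height `t = s / (2 μ(∂Ω))`: the part below `t` contributes at most `s/2`, and by the layer-cake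
formula the excess over `t` has integral at most `|B₁| t^{1-p}/(p-1)`. Chebyshev's inequality and
Tonelli then give the estimate with `c = 2^p |B₁| / (p - 1)`.
-/

open MeasureTheory Set Metric Module
open scoped ENNReal

section Marcinkiewicz

variable {X Y : Type*} [MeasurableSpace X] [MeasurableSpace Y]

theorem ofReal_integral_le_lintegral_ofReal {μ : Measure X} {f : X → ℝ} (hf : 0 ≤ᵐ[μ] f)
    (hfm : AEStronglyMeasurable f μ) :
    ENNReal.ofReal (∫ x, f x ∂μ) ≤ ∫⁻ x, ENNReal.ofReal (f x) ∂μ := by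
  rw [integral_eq_lintegral_of_nonneg_ae hf hfm]
  exact ENNReal.ofReal_toReal_le

theorem lintegral_le_mul_measure_univ_add_lintegral_tsub (μ : Measure X) (f : X → ℝ≥0∞)
    (c : ℝ≥0∞) : ∫⁻ x, f x ∂μ ≤ c * μ univ + ∫⁻ x, (f x - c) ∂μ :=
  calc ∫⁻ x, f x ∂μ ≤ ∫⁻ x, (c + (f x - c)) ∂μ := lintegral_mono fun _ => le_add_tsub
    _ = c * μ univ + ∫⁻ x, (f x - c) ∂μ := by
        rw [lintegral_add_left measurable_const, lintegral_const]

theorem lintegral_Ioi_const_add_rpow_neg {t p : ℝ} (ht : 0 < t) (hp : 1 < p) :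
    ∫⁻ τ in Ioi 0, ENNReal.ofReal ((t + τ) ^ (-p)) = ENNReal.ofReal (t ^ (1 - p) / (p - 1)) := by
  rw [(measurePreserving_add_left volume t).setLIntegral_comp_emb
      (measurableEmbedding_addLeft t) (fun τ => ENNReal.ofReal (τ ^ (-p))) (Ioi 0),
    image_const_add_Ioi, add_zero, ← ofReal_integral_eq_lintegral_ofReal
      (integrableOn_Ioi_rpow_of_lt (by linarith) ht)
      ((ae_restrict_iff' measurableSet_Ioi).mpr
        (ae_of_all _ fun τ hτ => Real.rpow_nonneg (ht.trans hτ).le _)),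
    integral_Ioi_rpow_of_lt (by linarith) ht]
  congr 1
  rw [show -p + 1 = 1 - p by ring, neg_div, ← div_neg, neg_sub]

theorem lintegral_ofReal_tsub_le_of_meas_lt_le {ν : Measure X} {g : X → ℝ} (hg : Measurable g)
    {B p t : ℝ} (hB : 0 ≤ B) (hp : 1 < p) (ht : 0 < t)
    (hsup : ∀ u > 0, ν {x | u < g x} ≤ ENNReal.ofReal (B * u ^ (-p))) :
    ∫⁻ x, (ENNReal.ofReal (g x) - ENNReal.ofReal t) ∂ν ≤
      ENNReal.ofReal (B * (t ^ (1 - p) / (p - 1))) := by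
  have hlevel : ∀ τ > 0, {x | τ < max (g x - t) 0} = {x | t + τ < g x} := fun τ hτ => by
    ext x
    simp only [mem_ofPred_eq, lt_max_iff]
    constructor
    · rintro (h | h) <;> linarith
    · exact fun h => Or.inl (by linarith)
  calc ∫⁻ x, (ENNReal.ofReal (g x) - ENNReal.ofReal t) ∂ν
      = ∫⁻ x, ENNReal.ofReal (max (g x - t) 0) ∂ν := by
        simp only [← ENNReal.ofReal_sub _ ht.le, ENNReal.ofReal_max, ENNReal.ofReal_zero, max_zero]
    _ = ∫⁻ τ in Ioi 0, ν {x | τ < max (g x - t) 0} :=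
        lintegral_eq_lintegral_meas_lt ν (ae_of_all _ fun _ => le_max_right _ _)
          ((hg.sub_const t).max measurable_const).aemeasurable
    _ ≤ ∫⁻ τ in Ioi 0, ENNReal.ofReal B * ENNReal.ofReal ((t + τ) ^ (-p)) := by
        refine setLIntegral_mono (by fun_prop) fun τ hτ => ?_
        rw [hlevel τ hτ, ← ENNReal.ofReal_mul hB]
        exact hsup _ (by linarith [mem_Ioi.mp hτ])
    _ = ENNReal.ofReal (B * (t ^ (1 - p) / (p - 1))) := by
        rw [lintegral_const_mul _ (by fun_prop), lintegral_Ioi_const_add_rpow_neg ht hp,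
          ← ENNReal.ofReal_mul hB]

theorem rpow_one_sub_mul_div_half {M s p : ℝ} (hM : 0 < M) (hs : 0 < s) :
    M * (s / (2 * M)) ^ (1 - p) / (s / 2) = 2 ^ p * (M / s) ^ p := by
  have ht : 0 < s / (2 * M) := by positivity
  rw [sub_eq_neg_add, Real.rpow_add ht, Real.rpow_one, Real.rpow_neg ht.le, ← Real.inv_rpow ht.le,
    ← Real.mul_rpow (by norm_num) (by positivity)]
  field_simp

theorem meas_lt_lintegral_le_of_meas_lt_le {ν : Measure X} [SFinite ν] {μ : Measure Y}
    [IsFiniteMeasure μ] {k : X → Y → ℝ} (hk : Measurable (Function.uncurry k)) {B p s : ℝ}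
    (hB : 0 ≤ B) (hp : 1 < p) (hs : 0 < s)
    (hsup : ∀ᵐ ξ ∂μ, ∀ u > 0, ν {x | u < k x ξ} ≤ ENNReal.ofReal (B * u ^ (-p))) :
    ν {x | ENNReal.ofReal s < ∫⁻ ξ, ENNReal.ofReal (k x ξ) ∂μ} ≤
      ENNReal.ofReal (2 ^ p * B / (p - 1) * (μ.real univ / s) ^ p) := by
  rcases eq_zero_or_neZero μ with rfl | _
  · simp
  set M := μ.real univ
  have hM : 0 < M := measureReal_univ_pos
  set t := s / (2 * M)
  have ht : 0 < t := by positivity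
  set F : X → ℝ≥0∞ := fun x => ∫⁻ ξ, (ENNReal.ofReal (k x ξ) - ENNReal.ofReal t) ∂μ
  have hF : Measurable F := (hk.ennreal_ofReal.sub measurable_const).lintegral_prod_right'
  have hmass : ENNReal.ofReal t * μ univ = ENNReal.ofReal (s / 2) := by
    rw [← ofReal_measureReal (measure_ne_top μ univ), ← ENNReal.ofReal_mul ht.le]
    congr 1
    change s / (2 * M) * M = s / 2
    field_simp
  have hsub : {x | ENNReal.ofReal s < ∫⁻ ξ, ENNReal.ofReal (k x ξ) ∂μ} ⊆
      {x | ENNReal.ofReal (s / 2) ≤ F x} := fun x hx => by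
    rw [← add_halves s, ENNReal.ofReal_add (by positivity) (by positivity)] at hx
    have h := hx.trans_le
      (lintegral_le_mul_measure_univ_add_lintegral_tsub μ _ (ENNReal.ofReal t))
    rw [hmass] at h
    exact ((ENNReal.add_lt_add_iff_left ENNReal.ofReal_ne_top).mp h).le
  have htail : ∀ᵐ ξ ∂μ, ∫⁻ x, (ENNReal.ofReal (k x ξ) - ENNReal.ofReal t) ∂ν ≤
      ENNReal.ofReal (B * (t ^ (1 - p) / (p - 1))) := hsup.mono fun ξ hξ =>
    lintegral_ofReal_tsub_le_of_meas_lt_le (hk.comp measurable_prodMk_right) hB hp ht hξ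
  calc ν {x | ENNReal.ofReal s < ∫⁻ ξ, ENNReal.ofReal (k x ξ) ∂μ}
      ≤ ν {x | ENNReal.ofReal (s / 2) ≤ F x} := measure_mono hsub
    _ ≤ (∫⁻ x, F x ∂ν) / ENNReal.ofReal (s / 2) :=
        meas_ge_le_lintegral_div hF.aemeasurable (by simpa using hs) ENNReal.ofReal_ne_top
    _ = (∫⁻ ξ, ∫⁻ x, (ENNReal.ofReal (k x ξ) - ENNReal.ofReal t) ∂ν ∂μ) /
          ENNReal.ofReal (s / 2) := by
        rw [lintegral_lintegral_swap (hk.ennreal_ofReal.sub measurable_const).aemeasurable]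
    _ ≤ (∫⁻ _, ENNReal.ofReal (B * (t ^ (1 - p) / (p - 1))) ∂μ) / ENNReal.ofReal (s / 2) := by
        gcongr ?_ / _
        exact lintegral_mono_ae htail
    _ = ENNReal.ofReal (B / (p - 1) * (M * t ^ (1 - p) / (s / 2))) := by
        rw [lintegral_const, ← ofReal_measureReal (measure_ne_top μ univ),
          ← ENNReal.ofReal_mul (by have := sub_pos.mpr hp; positivity),
          ← ENNReal.ofReal_div_of_pos (by positivity)]
        congr 1
        ring
    _ = ENNReal.ofReal (2 ^ p * B / (p - 1) * (M / s) ^ p) := by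
        rw [rpow_one_sub_mul_div_half hM hs]
        ring_nf

end Marcinkiewicz

theorem infDist_le_norm_sub_of_mem_closure {E : Type*} [SeminormedAddCommGroup E] {C : Set E}
    {ξ : E} (hξ : ξ ∈ closure C) (x : E) : infDist x C ≤ ‖x - ξ‖ := by
  rw [← infDist_closure, ← dist_eq_norm]
  exact infDist_le_dist_of_mem hξ

theorem rpow_mul_rpow_neg_add_le {d r a β : ℝ} (hd : 0 ≤ d) (hdr : d ≤ r) (ha : 0 ≤ a)
    (hβ : β ≠ 0) : d ^ a * r ^ (-(β + a)) ≤ r ^ (-β) :=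
  calc d ^ a * r ^ (-(β + a)) ≤ r ^ a * r ^ (-(β + a)) := by
        gcongr
        exact Real.rpow_nonneg (hd.trans hdr) _
    _ = r ^ (-β) := by
        rw [← Real.rpow_add' (hd.trans hdr) (by simpa using hβ)]
        ring_nf

theorem withDensity_rpow_meas_lt_le {E : Type*} [NormedAddCommGroup E] [NormedSpace ℝ E]
    [MeasurableSpace E] [BorelSpace E] [FiniteDimensional ℝ E] (μ : Measure E)
    [μ.IsAddHaarMeasure] {w : E → ℝ} {ξ : E} (hw0 : ∀ x, 0 ≤ w x) (hwξ : ∀ x, w x ≤ ‖x - ξ‖)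
    {a β u : ℝ} (ha : 0 ≤ a) (hβ : 0 < β) (hu : 0 < u) :
    μ.withDensity (fun x => ENNReal.ofReal (w x ^ a)) {x | u < w x ^ a * ‖x - ξ‖ ^ (-(β + a))} ≤
      ENNReal.ofReal (μ.real (ball 0 1) * u ^ (-((finrank ℝ E + a) / β))) := by
  set ρ := u ^ (-β)⁻¹
  have hρ : 0 < ρ := by positivity
  have hsub : {x | u < w x ^ a * ‖x - ξ‖ ^ (-(β + a))} ⊆ ball ξ ρ := fun x hx => by
    have hlt : u < ‖x - ξ‖ ^ (-β) :=
      hx.trans_le (rpow_mul_rpow_neg_add_le (hw0 x) (hwξ x) ha hβ.ne')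
    have hr : 0 < ‖x - ξ‖ := (norm_nonneg _).lt_of_ne fun h => by
      rw [← h, Real.zero_rpow (neg_ne_zero.mpr hβ.ne')] at hlt
      exact hlt.not_gt hu
    rwa [mem_ball, dist_eq_norm, Real.lt_rpow_inv_iff_of_neg hr hu (neg_lt_zero.mpr hβ)]
  calc μ.withDensity (fun x => ENNReal.ofReal (w x ^ a)) {x | u < w x ^ a * ‖x - ξ‖ ^ (-(β + a))}
      ≤ μ.withDensity (fun x => ENNReal.ofReal (w x ^ a)) (ball ξ ρ) := measure_mono hsub
    _ = ∫⁻ x in ball ξ ρ, ENNReal.ofReal (w x ^ a) ∂μ := withDensity_apply' _ _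
    _ ≤ ∫⁻ _ in ball ξ ρ, ENNReal.ofReal (ρ ^ a) ∂μ := setLIntegral_mono measurable_const
        fun x hx => by
          gcongr
          · exact hw0 x
          · exact (hwξ x).trans (mem_ball_iff_norm.mp hx).le
    _ = ENNReal.ofReal (ρ ^ a * ρ ^ finrank ℝ E * μ.real (ball 0 1)) := by
        rw [setLIntegral_const, Measure.addHaar_ball_of_pos μ ξ hρ,
          ← ofReal_measureReal measure_ball_lt_top.ne, ← ENNReal.ofReal_mul (by positivity),
          ← ENNReal.ofReal_mul (by positivity), mul_assoc]
    _ = ENNReal.ofReal (μ.real (ball 0 1) * u ^ (-((finrank ℝ E + a) / β))) := by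
        rw [← Real.rpow_natCast, ← Real.rpow_add hρ, ← Real.rpow_mul hu.le]
        congr 1
        field_simp
        ring_nf

theorem stmt_12_general {N : ℕ} (hN : 2 ≤ N)
    (Ω : Set (EuclideanSpace ℝ (Fin N)))
    (κ α : ℝ)
    (hα : α = 1 + Real.sqrt (1 - 4 * κ)) :
    ∃ c : ℝ, 0 < c ∧
      ∀ μ : Measure (EuclideanSpace ℝ (Fin N)), IsFiniteMeasure μ →
        μ (frontier Ω)ᶜ = 0 →
        ∀ s : ℝ, 0 < s →
          ∫⁻ x in {x | x ∈ Ω ∧ s <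
              ∫ ξ in frontier Ω,
                (Metric.infDist x Ωᶜ) ^ (α / 2) * ‖x - ξ‖ ^ (-((N : ℝ) + α - 2)) ∂μ},
            ENNReal.ofReal ((Metric.infDist x Ωᶜ) ^ (α / 2)) ≤
          ENNReal.ofReal
            (c * ((μ (frontier Ω)).toReal / s)
              ^ (((N : ℝ) + α / 2) / ((N : ℝ) - 2 + α / 2))) := by
  have hα0 : 0 < α := by rw [hα]; positivity
  have hβ : 0 < (N : ℝ) - 2 + α / 2 := by
    have : (2 : ℝ) ≤ N := by exact_mod_cast hN
    linarith
  set p := ((N : ℝ) + α / 2) / ((N : ℝ) - 2 + α / 2)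
  have hp : 1 < p := (one_lt_div hβ).mpr (by linarith)
  set B := volume.real (ball (0 : EuclideanSpace ℝ (Fin N)) 1)
  have hB : 0 < B :=
    ENNReal.toReal_pos (measure_ball_pos volume 0 one_pos).ne' measure_ball_lt_top.ne
  refine ⟨2 ^ p * B / (p - 1), by have := sub_pos.mpr hp; positivity, fun μ _ _ s hs => ?_⟩
  set d : EuclideanSpace ℝ (Fin N) → ℝ := fun x => infDist x Ωᶜ
  set k : EuclideanSpace ℝ (Fin N) → EuclideanSpace ℝ (Fin N) → ℝ := fun x ξ =>
    d x ^ (α / 2) * ‖x - ξ‖ ^ (-((N : ℝ) + α - 2))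
  set ν := volume.withDensity fun x => ENNReal.ofReal (d x ^ (α / 2))
  have hk : Measurable (Function.uncurry k) := by
    have : Continuous d := continuous_infDist_pt _
    fun_prop
  have hsup : ∀ ξ ∈ frontier Ω, ∀ u > 0, ν {x | u < k x ξ} ≤ ENNReal.ofReal (B * u ^ (-p)) := by
    intro ξ hξ u hu
    rw [← frontier_compl] at hξ
    have h := withDensity_rpow_meas_lt_le volume (w := d) (fun x => infDist_nonneg)
      (infDist_le_norm_sub_of_mem_closure (frontier_subset_closure hξ)) (a := α / 2)
      (by positivity) hβ hu
    rwa [finrank_euclideanSpace_fin, show (N : ℝ) - 2 + α / 2 + α / 2 = N + α - 2 by ring] at h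
  calc ∫⁻ x in {x | x ∈ Ω ∧ s < ∫ ξ in frontier Ω, k x ξ ∂μ}, ENNReal.ofReal (d x ^ (α / 2))
      = ν {x | x ∈ Ω ∧ s < ∫ ξ in frontier Ω, k x ξ ∂μ} := (withDensity_apply' _ _).symm
    _ ≤ ν {x | ENNReal.ofReal s < ∫⁻ ξ in frontier Ω, ENNReal.ofReal (k x ξ) ∂μ} :=
        measure_mono fun x hx => ((ENNReal.ofReal_lt_ofReal_iff_of_nonneg hs.le).mpr hx.2).trans_le
          (ofReal_integral_le_lintegral_ofReal (ae_of_all _ fun ξ =>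
            mul_nonneg (Real.rpow_nonneg infDist_nonneg _) (Real.rpow_nonneg (norm_nonneg _) _))
            (hk.comp measurable_prodMk_left).aestronglyMeasurable)
    _ ≤ ENNReal.ofReal (2 ^ p * B / (p - 1) * ((μ.restrict (frontier Ω)).real univ / s) ^ p) :=
        meas_lt_lintegral_le_of_meas_lt_le hk hB.le hp hs
          (ae_restrict_of_forall_mem isClosed_frontier.measurableSet hsup)
    _ = _ := by rw [measureReal_restrict_apply_univ]; rfl

/-- the weak Marcinkiewicz-type estimate for the Poisson-type potential
`K̃[μ](x) = ∫_{∂Ω} d(x)^{α/2} |x-ξ|^{-(N+α-2)} dμ(ξ)` of a finite positive measure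
`μ` supported on `∂Ω`:
`∫_{{K̃[μ] > s}} d^{α/2} dx ≤ c (μ(∂Ω)/s)^{(N+α/2)/(N-2+α/2)}`. -/
theorem stmt_12 {N : ℕ} (hN : 2 ≤ N)
    (Ω : Set (EuclideanSpace ℝ (Fin N))) (hΩo : IsOpen Ω) (hΩb : Bornology.IsBounded Ω)
    (κ α : ℝ) (hκ0 : 0 < κ) (hκ1 : κ ≤ 1 / 4)
    (hα : α = 1 + Real.sqrt (1 - 4 * κ)) :
    ∃ c : ℝ, 0 < c ∧
      ∀ μ : Measure (EuclideanSpace ℝ (Fin N)), IsFiniteMeasure μ →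
        μ (frontier Ω)ᶜ = 0 →
        ∀ s : ℝ, 0 < s →
          ∫⁻ x in {x | x ∈ Ω ∧ s <
              ∫ ξ in frontier Ω,
                (Metric.infDist x Ωᶜ) ^ (α / 2) * ‖x - ξ‖ ^ (-((N : ℝ) + α - 2)) ∂μ},
            ENNReal.ofReal ((Metric.infDist x Ωᶜ) ^ (α / 2)) ≤
          ENNReal.ofReal
            (c * ((μ (frontier Ω)).toReal / s)
              ^ (((N : ℝ) + α / 2) / ((N : ℝ) - 2 + α / 2))) :=
  stmt_12_general hN Ω κ α hα
end

section
/- Let N ≥ 2, let Ω ⊂ ℝ^N be a bounded convex open set, and suppose there is β₀ > 0 such that d is twice continuously differentiable on {x ∈ Ω : d(x) < β₀} with |∇d| = 1 there. Let 0 < κ < 1/4 and set α₋ = 1 − √(1 − 4κ). Let u be a continuous C² function on Ω satisfying Δu(x) + κ·u(x)/d(x)² ≥ 0 for every x ∈ Ω, and assume that for every ε > 0 there exists δ > 0 such that u(x) ≤ ε·d(x)^{α₋/2} whenever x ∈ Ω and d(x) < δ. Then u(x) ≤ 0 for every x ∈ Ω. -/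
/-
Suppose `u > 0` somewhere and write `d` for the distance to `Ωᶜ`, `γ = α₋ / 2`. The barrier
`φ = d ^ γ + d ^ (1/2)` dominates `d ^ γ`, so by the boundary condition and compactness the
least `c` with `u ≤ c φ` is positive and attained at an interior point `x₀`. Since `Ω` is convex,
`d` is concave, hence so is `φ`, and a concave function touching `u` from above at `x₀` makes the
Hessian of `u` there negative semidefinite. Along the ray from a nearest boundary point through
`x₀`, `d` is bounded by the (affine) distance to that point, which bounds the second derivative of
`u` in that direction by `c (t ^ γ + t ^ (1/2))''` at `t = d x₀`. Taking the trace,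
`Δu + κ u / d² ≤ c (κ - 1/4) d ^ (-3/2) < 0` at `x₀`, contradicting the subsolution inequality.
-/

open Set Filter Topology Metric
open scoped RealInnerProductSpace

theorem second_deriv_nonpos_of_second_diff_nonpos {f f' : ℝ → ℝ} {t₀ a : ℝ}
    (hf : ∀ᶠ t in 𝓝 t₀, HasDerivAt f (f' t) t) (hf' : HasDerivAt f' a t₀)
    (hdiff : ∀ᶠ h in 𝓝[>] 0, f (t₀ + h) + f (t₀ - h) ≤ 2 * f t₀) : a ≤ 0 := by
  -- if `a > 0`, then `σ' > 0` just to the right of `0`, so `σ > 0` there by the mean value theorem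
  by_contra! ha
  set σ : ℝ → ℝ := fun h => f (t₀ + h) + f (t₀ - h) - 2 * f t₀
  set σ' : ℝ → ℝ := fun h => f' (t₀ + h) - f' (t₀ - h)
  have hσ : ∀ᶠ h in 𝓝 0, HasDerivAt σ (σ' h) h := by
    have hplus : ∀ᶠ h in 𝓝 (0 : ℝ), HasDerivAt f (f' (t₀ + h)) (t₀ + h) :=
      (continuous_const_add t₀).tendsto' 0 t₀ (add_zero t₀) |>.eventually hf
    have hminus : ∀ᶠ h in 𝓝 (0 : ℝ), HasDerivAt f (f' (t₀ - h)) (t₀ - h) :=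
      (continuous_const.sub continuous_id).tendsto' 0 t₀ (sub_zero t₀) |>.eventually hf
    filter_upwards [hplus, hminus] with h h₁ h₂
    exact ((h₁.comp_const_add t₀ h).add (h₂.comp_const_sub t₀ h)).sub_const (2 * f t₀)
  have hσ' : HasDerivAt σ' (2 * a) 0 := by
    have h₁ := (show HasDerivAt f' a (t₀ + 0) by simpa using hf').comp_const_add t₀ 0
    have h₂ := (show HasDerivAt f' a (t₀ - 0) by simpa using hf').comp_const_sub t₀ 0
    exact (h₁.sub h₂).congr_deriv (by ring)
  have hσ'pos : ∀ᶠ h in 𝓝[>] 0, 0 < σ' h := by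
    have h2a : (0 : ℝ) < 2 * a := by linarith
    filter_upwards [hσ'.tendsto_slope_zero_right.eventually (lt_mem_nhds h2a),
      self_mem_nhdsWithin] with h hslope (hh : 0 < h)
    have : 0 < h⁻¹ * σ' h := by simpa [σ'] using hslope
    exact pos_of_mul_pos_right this (inv_nonneg.2 hh.le)
  obtain ⟨c, hc : 0 < c, hcprop⟩ := mem_nhdsGT_iff_exists_Ioo_subset.1
    (hσ'pos.and (hdiff.and (eventually_nhdsWithin_of_eventually_nhds hσ)))
  obtain ⟨ξ, hξ, hslope⟩ := exists_hasDerivAt_eq_slope σ σ' (half_pos hc)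
    (fun t ht => by
      rcases ht.1.eq_or_lt with rfl | ht₀
      · exact hσ.self_of_nhds.continuousAt.continuousWithinAt
      · exact (hcprop ⟨ht₀, by linarith [ht.2]⟩).2.2.continuousAt.continuousWithinAt)
    (fun t ht => (hcprop ⟨ht.1, by linarith [ht.2]⟩).2.2)
  have hpos := (hcprop ⟨hξ.1, by linarith [hξ.2]⟩).1
  have hle : σ (c / 2) ≤ 0 := by
    simpa [σ] using (hcprop ⟨half_pos hc, by linarith⟩).2.1
  have : σ 0 = 0 := by simp [σ]; ring
  rw [hslope, this, sub_zero, sub_zero] at hpos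
  linarith [(div_pos_iff_of_pos_right (half_pos hc)).1 hpos]

theorem second_deriv_le_of_le {f f' g g' : ℝ → ℝ} {t₀ a b : ℝ}
    (hf : ∀ᶠ t in 𝓝 t₀, HasDerivAt f (f' t) t) (hf' : HasDerivAt f' a t₀)
    (hg : ∀ᶠ t in 𝓝 t₀, HasDerivAt g (g' t) t) (hg' : HasDerivAt g' b t₀)
    (hle : ∀ᶠ t in 𝓝 t₀, f t ≤ g t) (heq : f t₀ = g t₀) : a ≤ b := by
  have hplus : ∀ᶠ h in 𝓝 (0 : ℝ), f (t₀ + h) ≤ g (t₀ + h) :=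
    (continuous_const_add t₀).tendsto' 0 t₀ (add_zero t₀) |>.eventually hle
  have hminus : ∀ᶠ h in 𝓝 (0 : ℝ), f (t₀ - h) ≤ g (t₀ - h) :=
    (continuous_const.sub continuous_id).tendsto' 0 t₀ (sub_zero t₀) |>.eventually hle
  refine sub_nonpos.1 (second_deriv_nonpos_of_second_diff_nonpos (f := f - g) (f' := f' - g')
    (hf.and hg |>.mono fun t ht => ht.1.sub ht.2) (hf'.sub hg') ?_)
  filter_upwards [eventually_nhdsWithin_of_eventually_nhds (hplus.and hminus)] with h hh
  simp only [Pi.sub_apply, heq]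
  linarith [hh.1, hh.2]

section Lines

variable {E F : Type*} [NormedAddCommGroup E] [NormedSpace ℝ E]
  [NormedAddCommGroup F] [NormedSpace ℝ F]

theorem DifferentiableAt.hasDerivAt_comp_add_smul {u : E → F} {y w : E} {t : ℝ}
    (hu : DifferentiableAt ℝ u (y + t • w)) :
    HasDerivAt (fun s : ℝ => u (y + s • w)) (fderiv ℝ u (y + t • w) w) t := by
  have hline : HasDerivAt (fun s : ℝ => y + s • w) w t := by
    simpa using ((hasDerivAt_id t).smul_const w).const_add y
  exact hu.hasFDerivAt.comp_hasDerivAt t hline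

theorem DifferentiableAt.hasDerivAt_fderiv_comp_add_smul {u : E → F} {y w : E} {t : ℝ}
    (hu : DifferentiableAt ℝ (fderiv ℝ u) (y + t • w)) :
    HasDerivAt (fun s : ℝ => fderiv ℝ u (y + s • w) w)
      (fderiv ℝ (fderiv ℝ u) (y + t • w) w w) t := by
  simpa using hu.hasDerivAt_comp_add_smul.clm_apply (hasDerivAt_const t w)

theorem Filter.Eventually.hasDerivAt_comp_add_smul {u : E → F} {y w : E} {t₀ : ℝ}
    (hu : ∀ᶠ z in 𝓝 (y + t₀ • w), DifferentiableAt ℝ u z) :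
    ∀ᶠ t in 𝓝 t₀, HasDerivAt (fun s : ℝ => u (y + s • w)) (fderiv ℝ u (y + t • w) w) t :=
  ((continuous_const.add (continuous_id.smul continuous_const)).tendsto t₀).eventually hu
    |>.mono fun _ ht => ht.hasDerivAt_comp_add_smul

end Lines

section Hessian

variable {E : Type*} [NormedAddCommGroup E] [NormedSpace ℝ E] {u : E → ℝ}

theorem fderiv_fderiv_apply_le_of_le_on_line {g g' : ℝ → ℝ} {y w : E} {t₀ b : ℝ}
    (hu : ∀ᶠ z in 𝓝 (y + t₀ • w), DifferentiableAt ℝ u z)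
    (hu₂ : DifferentiableAt ℝ (fderiv ℝ u) (y + t₀ • w))
    (hg : ∀ᶠ t in 𝓝 t₀, HasDerivAt g (g' t) t) (hg' : HasDerivAt g' b t₀)
    (hle : ∀ᶠ t in 𝓝 t₀, u (y + t • w) ≤ g t) (heq : u (y + t₀ • w) = g t₀) :
    fderiv ℝ (fderiv ℝ u) (y + t₀ • w) w w ≤ b :=
  second_deriv_le_of_le hu.hasDerivAt_comp_add_smul hu₂.hasDerivAt_fderiv_comp_add_smul
    hg hg' hle heq

theorem fderiv_fderiv_apply_self_nonpos_of_le_concaveOn {Φ : E → ℝ} {s : Set E} {x : E}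
    (hu : ∀ᶠ y in 𝓝 x, DifferentiableAt ℝ u y) (hu₂ : DifferentiableAt ℝ (fderiv ℝ u) x)
    (hΦ : ConcaveOn ℝ s Φ) (hs : s ∈ 𝓝 x) (hle : ∀ y ∈ s, u y ≤ Φ y) (heq : u x = Φ x)
    (w : E) : fderiv ℝ (fderiv ℝ u) x w w ≤ 0 := by
  have hx : x + (0 : ℝ) • w = x := by simp
  have hline : ∀ᶠ t in 𝓝 (0 : ℝ), x + t • w ∈ s :=
    ((continuous_const.add (continuous_id.smul continuous_const)).tendsto' 0 x hx).eventually hs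
  refine second_deriv_nonpos_of_second_diff_nonpos (t₀ := 0)
    (hx ▸ hu).hasDerivAt_comp_add_smul (hx ▸ hu₂).hasDerivAt_fderiv_comp_add_smul ?_ |>.trans_eq' ?_
  · filter_upwards [eventually_nhdsWithin_of_eventually_nhds
      (hline.and ((continuous_neg.tendsto' 0 0 neg_zero).eventually hline))] with h ⟨hp, hq⟩
    have hmid : (1 / 2 : ℝ) • (x + h • w) + (1 / 2 : ℝ) • (x + -h • w) = x := by module
    have hconc := hΦ.2 hp hq (by norm_num) (by norm_num) (add_halves 1)
    rw [hmid, smul_eq_mul, smul_eq_mul] at hconc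
    simp only [zero_add, zero_sub, hx]
    linarith [hle _ hp, hle _ hq]
  · simp

end Hessian

theorem OrthonormalBasis.sum_apply_apply_le {ι E : Type*} [Fintype ι] [NormedAddCommGroup E]
    [InnerProductSpace ℝ E] (b : OrthonormalBasis ι ℝ E) {B : E →L[ℝ] E →L[ℝ] ℝ}
    (hB : ∀ w, B w w ≤ 0) {ν : E} (hν : ‖ν‖ = 1) : ∑ i, B (b i) (b i) ≤ B ν ν := by
  set c : ι → ℝ := fun i => ⟪b i, ν⟫
  have hrepr : ∑ i, c i • b i = ν := b.sum_repr' ν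
  have hsq : ∑ i, c i ^ 2 = 1 := by rw [b.sum_sq_inner_right, hν, one_pow]
  have hleft : B (∑ i, c i • b i) ν = ∑ i, c i * B (b i) ν := by simp
  have hright : B ν (∑ i, c i • b i) = ∑ i, c i * B ν (b i) := by simp
  rw [hrepr] at hleft hright
  have hsplit : ∑ i, B (b i) (b i) = B ν ν + ∑ i, B (b i - c i • ν) (b i - c i • ν) := by
    simp only [map_sub, map_smul, sub_apply, smul_apply, smul_eq_mul, mul_sub,
      Finset.sum_sub_distrib, ← mul_assoc, ← pow_two, ← Finset.sum_mul, hsq, ← hleft, ← hright]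
    ring
  rw [hsplit]
  exact add_le_of_nonpos_right (Finset.sum_nonpos fun i _ => hB _)

theorem Convex.concaveOn_infDist_compl {E : Type*} [NormedAddCommGroup E] [NormedSpace ℝ E]
    {s : Set E} (hs : Convex ℝ s) : ConcaveOn ℝ s (fun x => infDist x sᶜ) := by
  refine ⟨hs, fun x hx y hy a b ha hb hab => ?_⟩
  simp only [smul_eq_mul]
  rcases sᶜ.eq_empty_or_nonempty with hempty | hne
  · simp [hempty]
  refine (le_infDist hne).2 fun q hq => ?_
  by_contra! hlt
  set R := a * infDist x sᶜ + b * infDist y sᶜ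
  have hR : 0 < R := dist_nonneg.trans_lt hlt
  set v := q - (a • x + b • y)
  have hv : ‖v‖ < R := by rwa [dist_comm, dist_eq_norm] at hlt
  have hshift : ∀ p ∈ s, p + (infDist p sᶜ / R) • v ∈ s := by
    intro p hp
    rcases (infDist_nonneg (x := p) (s := sᶜ)).eq_or_lt with h0 | hpos
    · simpa [← h0] using hp
    apply ball_infDist_compl_subset
    rw [mem_ball, dist_eq_norm, add_sub_cancel_left, norm_smul, Real.norm_of_nonneg (by positivity)]
    calc infDist p sᶜ / R * ‖v‖ < infDist p sᶜ / R * R := by gcongr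
      _ = infDist p sᶜ := div_mul_cancel₀ _ hR.ne'
  have hcombo : a • (x + (infDist x sᶜ / R) • v) + b • (y + (infDist y sᶜ / R) • v) = q := by
    have : a * (infDist x sᶜ / R) + b * (infDist y sᶜ / R) = 1 := by
      rw [← mul_div_assoc, ← mul_div_assoc, ← add_div]
      exact div_self hR.ne'
    calc _ = (a • x + b • y) + (a * (infDist x sᶜ / R) + b * (infDist y sᶜ / R)) • v := by
          module
      _ = q := by rw [this, one_smul, add_sub_cancel]
  exact hq (hcombo ▸ hs (hshift x hx) (hshift y hy) ha hb hab)

theorem ConcaveOn.comp_of_mapsTo {E : Type*} [AddCommMonoid E] [Module ℝ E] {s : Set E}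
    {t : Set ℝ} {f : E → ℝ} {g : ℝ → ℝ} (hg : ConcaveOn ℝ t g) (hf : ConcaveOn ℝ s f)
    (hg' : MonotoneOn g t) (hst : MapsTo f s t) : ConcaveOn ℝ s (g ∘ f) :=
  ⟨hf.1, fun _ hx _ hy _ _ ha hb hab =>
    (hg.2 (hst hx) (hst hy) ha hb hab).trans <|
      hg' (hg.1 (hst hx) (hst hy) ha hb hab) (hst (hf.1 hx hy ha hb hab)) (hf.2 hx hy ha hb hab)⟩

theorem exists_pos_mul_touching_from_above {α : Type*} [PseudoMetricSpace α] [ProperSpace α]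
    {Ω : Set α} (hΩ : Bornology.IsBounded Ω) {u φ : α → ℝ} (hu : ContinuousOn u Ω) (hφ : ContinuousOn φ Ω)
    (hφpos : ∀ x ∈ Ω, 0 < φ x)
    (hbdry : ∀ ε > 0, ∃ δ > 0, ∀ x ∈ Ω, infDist x Ωᶜ < δ → u x ≤ ε * φ x)
    {x₁ : α} (hx₁ : x₁ ∈ Ω) (hux₁ : 0 < u x₁) :
    ∃ x₀ ∈ Ω, ∃ c > 0, (∀ y ∈ Ω, u y ≤ c * φ y) ∧ u x₀ = c * φ x₀ := by
  set ε := u x₁ / φ x₁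
  have hε : 0 < ε := div_pos hux₁ (hφpos x₁ hx₁)
  obtain ⟨δ, hδ, hnear⟩ := hbdry (ε / 2) (half_pos hε)
  set K := closure Ω ∩ {x | δ ≤ infDist x Ωᶜ}
  have hKΩ : K ⊆ Ω := fun x ⟨_, (hx : δ ≤ infDist x Ωᶜ)⟩ => by
    by_contra hxΩ
    rw [infDist_zero_of_mem (mem_compl hxΩ)] at hx
    exact hδ.not_ge hx
  have hK : IsCompact K :=
    hΩ.isCompact_closure.inter_right (isClosed_le continuous_const (continuous_infDist_pt _))
  have hx₁K : x₁ ∈ K := by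
    refine ⟨subset_closure hx₁, show δ ≤ infDist x₁ Ωᶜ from not_lt.1 fun hlt => ?_⟩
    have hhalf : ε / 2 * φ x₁ = u x₁ / 2 := by
      rw [div_mul_eq_mul_div, div_mul_cancel₀ _ (hφpos x₁ hx₁).ne']
    linarith [hnear x₁ hx₁ hlt]
  obtain ⟨x₀, hx₀K, hmax⟩ := hK.exists_isMaxOn ⟨x₁, hx₁K⟩
    ((hu.div hφ fun x hx => (hφpos x hx).ne').mono hKΩ)
  have hεc : ε ≤ u x₀ / φ x₀ := hmax hx₁K
  refine ⟨x₀, hKΩ hx₀K, u x₀ / φ x₀, hε.trans_le hεc, fun y hy => ?_,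
    (div_mul_cancel₀ _ (hφpos x₀ (hKΩ hx₀K)).ne').symm⟩
  rcases lt_or_ge (infDist y Ωᶜ) δ with hyδ | hyδ
  · exact (hnear y hy hyδ).trans
      (mul_le_mul_of_nonneg_right (by linarith) (hφpos y hy).le)
  · exact (div_le_iff₀ (hφpos y hy)).1 (hmax ⟨subset_closure hy, hyδ⟩)

theorem hasDerivAt_mul_rpow_sub_one (p : ℝ) {t : ℝ} (ht : 0 < t) :
    HasDerivAt (fun s => p * s ^ (p - 1)) (p * (p - 1) * t ^ (p - 2)) t := by
  refine ((Real.hasDerivAt_rpow_const (p := p - 1) (Or.inl ht.ne')).const_mul p).congr_deriv ?_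
  rw [sub_sub, one_add_one_eq_two, mul_assoc]

/-- When `γ (γ - 1) = -κ`, the operator `d²/dt² + κ / t²` annihilates `t ^ γ` and is negative on
`t ^ (1/2)` as soon as `κ < 1/4`. -/
noncomputable def hardyBarrier (γ t : ℝ) : ℝ := t ^ γ + t ^ (1 / 2 : ℝ)

section HardyBarrier

variable {γ t : ℝ}

theorem hardyBarrier_pos (ht : 0 < t) : 0 < hardyBarrier γ t := by
  unfold hardyBarrier; positivity

theorem rpow_le_hardyBarrier (ht : 0 ≤ t) : t ^ γ ≤ hardyBarrier γ t :=
  le_add_of_nonneg_right (by positivity)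

theorem concaveOn_hardyBarrier (hγ₀ : 0 ≤ γ) (hγ₁ : γ ≤ 1) :
    ConcaveOn ℝ (Ici 0) (hardyBarrier γ) :=
  (Real.concaveOn_rpow hγ₀ hγ₁).add (Real.concaveOn_rpow (by norm_num) (by norm_num))

theorem monotoneOn_hardyBarrier (hγ₀ : 0 ≤ γ) : MonotoneOn (hardyBarrier γ) (Ici 0) :=
  (Real.monotoneOn_rpow_Ici_of_exponent_nonneg hγ₀).add
    (Real.monotoneOn_rpow_Ici_of_exponent_nonneg (by norm_num))

theorem continuousOn_hardyBarrier : ContinuousOn (hardyBarrier γ) (Ioi 0) :=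
  fun _ hs => ((Real.continuousAt_rpow_const _ _ (Or.inl (ne_of_gt hs))).add
    (Real.continuousAt_rpow_const _ _ (Or.inl (ne_of_gt hs)))).continuousWithinAt

theorem hasDerivAt_hardyBarrier (ht : 0 < t) :
    HasDerivAt (hardyBarrier γ) (γ * t ^ (γ - 1) + 1 / 2 * t ^ (1 / 2 - 1 : ℝ)) t :=
  (Real.hasDerivAt_rpow_const (Or.inl ht.ne')).add (Real.hasDerivAt_rpow_const (Or.inl ht.ne'))

theorem hasDerivAt_hardyBarrier_deriv (ht : 0 < t) :
    HasDerivAt (fun s => γ * s ^ (γ - 1) + 1 / 2 * s ^ (1 / 2 - 1 : ℝ))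
      (γ * (γ - 1) * t ^ (γ - 2) + 1 / 2 * (1 / 2 - 1) * t ^ (1 / 2 - 2 : ℝ)) t :=
  (hasDerivAt_mul_rpow_sub_one γ ht).add (hasDerivAt_mul_rpow_sub_one _ ht)

theorem hardyBarrier_strict_supersolution {κ : ℝ} (hγκ : γ * (γ - 1) = -κ) (hκ : κ < 1 / 4)
    (ht : 0 < t) :
    γ * (γ - 1) * t ^ (γ - 2) + 1 / 2 * (1 / 2 - 1) * t ^ (1 / 2 - 2 : ℝ)
      + κ * hardyBarrier γ t / t ^ 2 < 0 := by
  have hsq : t ^ (2 : ℕ) = t ^ (2 : ℝ) := (Real.rpow_natCast t 2).symm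
  have hdiv : ∀ p : ℝ, t ^ p / t ^ 2 = t ^ (p - 2) := fun p => by
    rw [hsq, ← Real.rpow_sub ht]
  have h : 0 < t ^ (1 / 2 - 2 : ℝ) := by positivity
  calc _ = (γ * (γ - 1) + κ) * t ^ (γ - 2) + (κ - 1 / 4) * t ^ (1 / 2 - 2 : ℝ) := by
        rw [hardyBarrier, mul_add, add_div, mul_div_assoc, mul_div_assoc, hdiv, hdiv]; ring
    _ < 0 := by
      rw [hγκ, neg_add_cancel, zero_mul, zero_add]
      exact mul_neg_of_neg_of_pos (by linarith) h

end HardyBarrier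

theorem one_sub_sqrt_one_sub_four_mul_div_two_spec {κ γ : ℝ} (hκ0 : 0 < κ) (hκ1 : κ ≤ 1 / 4)
    (hγ : γ = (1 - √(1 - 4 * κ)) / 2) : 0 < γ ∧ γ ≤ 1 / 2 ∧ γ * (γ - 1) = -κ := by
  have hsq : √(1 - 4 * κ) ^ 2 = 1 - 4 * κ := Real.sq_sqrt (by linarith)
  have hlt : √(1 - 4 * κ) < 1 := by
    rw [Real.sqrt_lt' one_pos]; linarith
  subst hγ
  exact ⟨by linarith, by linarith [Real.sqrt_nonneg (1 - 4 * κ)], by linear_combination hsq / 4⟩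

theorem laplacian_eq_sum_fderiv_fderiv {N : ℕ} (u : EuclideanSpace ℝ (Fin N) → ℝ)
    (x : EuclideanSpace ℝ (Fin N)) :
    laplacian u x = ∑ i, fderiv ℝ (fderiv ℝ u) x (EuclideanSpace.basisFun (Fin N) ℝ i)
      (EuclideanSpace.basisFun (Fin N) ℝ i) := by
  simp [laplacian, iteratedFDeriv_two_apply]

theorem laplacian_le_of_le_comp_infDist {N : ℕ} {Ω : Set (EuclideanSpace ℝ (Fin N))}
    (hΩo : IsOpen Ω) (hΩconv : Convex ℝ Ω) (hne : Ωᶜ.Nonempty)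
    {u : EuclideanSpace ℝ (Fin N) → ℝ} {x₀ : EuclideanSpace ℝ (Fin N)} (hx₀ : x₀ ∈ Ω)
    (hu : ∀ᶠ y in 𝓝 x₀, DifferentiableAt ℝ u y) (hu₂ : DifferentiableAt ℝ (fderiv ℝ u) x₀)
    {ψ ψ' : ℝ → ℝ} {b : ℝ} (hψc : ConcaveOn ℝ (Ici 0) ψ) (hψm : MonotoneOn ψ (Ici 0))
    (hψ : ∀ᶠ t in 𝓝 (infDist x₀ Ωᶜ), HasDerivAt ψ (ψ' t) t)
    (hψ' : HasDerivAt ψ' b (infDist x₀ Ωᶜ))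
    (hle : ∀ y ∈ Ω, u y ≤ ψ (infDist y Ωᶜ)) (heq : u x₀ = ψ (infDist x₀ Ωᶜ)) :
    laplacian u x₀ ≤ b := by
  set m := infDist x₀ Ωᶜ
  have hm : 0 < m := (hΩo.isClosed_compl.notMem_iff_infDist_pos hne).1 (not_not_intro hx₀)
  have hconc : ∀ w, fderiv ℝ (fderiv ℝ u) x₀ w w ≤ 0 :=
    fderiv_fderiv_apply_self_nonpos_of_le_concaveOn hu hu₂
      (hψc.comp_of_mapsTo hΩconv.concaveOn_infDist_compl hψm fun _ _ => infDist_nonneg)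
      (hΩo.mem_nhds hx₀) hle heq
  obtain ⟨ξ, hξ, hξm⟩ := hΩo.isClosed_compl.exists_infDist_eq_dist hne x₀
  set ν := m⁻¹ • (x₀ - ξ)
  have hν : ‖ν‖ = 1 := by
    rw [norm_smul, ← dist_eq_norm, ← hξm, norm_inv, Real.norm_of_nonneg hm.le,
      inv_mul_cancel₀ hm.ne']
  have hx₀ν : ξ + m • ν = x₀ := by
    rw [smul_inv_smul₀ hm.ne', add_sub_cancel]
  have hray : ∀ᶠ t in 𝓝 m, u (ξ + t • ν) ≤ ψ t := by
    have hcont : Tendsto (fun t : ℝ => ξ + t • ν) (𝓝 m) (𝓝 x₀) :=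
      hx₀ν ▸ (continuous_const.add (continuous_id.smul continuous_const)).tendsto m
    filter_upwards [hcont.eventually (hΩo.mem_nhds hx₀), lt_mem_nhds hm] with t htΩ ht
    refine (hle _ htΩ).trans (hψm infDist_nonneg ht.le ?_)
    calc infDist (ξ + t • ν) Ωᶜ ≤ dist (ξ + t • ν) ξ := infDist_le_dist_of_mem hξ
      _ = t := by rw [dist_eq_norm, add_sub_cancel_left, norm_smul, hν, mul_one,
          Real.norm_of_nonneg ht.le]
  have hradial : fderiv ℝ (fderiv ℝ u) x₀ ν ν ≤ b := by
    have := fderiv_fderiv_apply_le_of_le_on_line (hx₀ν ▸ hu) (hx₀ν ▸ hu₂) hψ hψ' hray (hx₀ν ▸ heq)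
    rwa [hx₀ν] at this
  rw [laplacian_eq_sum_fderiv_fderiv]
  exact ((EuclideanSpace.basisFun (Fin N) ℝ).sum_apply_apply_le hconc hν).trans hradial

theorem stmt_13_general {N : ℕ}
    (Ω : Set (EuclideanSpace ℝ (Fin N))) (hΩo : IsOpen Ω) (hΩb : Bornology.IsBounded Ω)
    (hΩconv : Convex ℝ Ω)
    (κ : ℝ) (hκ0 : 0 < κ) (hκ1 : κ < 1 / 4)
    (u : EuclideanSpace ℝ (Fin N) → ℝ) (huC : ContDiffOn ℝ 2 u Ω)
    (hsub : ∀ x ∈ Ω,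
      0 ≤ laplacian u x + κ * u x / (Metric.infDist x Ωᶜ) ^ 2)
    (hbdry : ∀ ε : ℝ, 0 < ε → ∃ δ : ℝ, 0 < δ ∧
      ∀ x ∈ Ω, Metric.infDist x Ωᶜ < δ →
        u x ≤ ε * (Metric.infDist x Ωᶜ) ^ ((1 - Real.sqrt (1 - 4 * κ)) / 2)) :
    ∀ x ∈ Ω, u x ≤ 0 := by
  set γ := (1 - √(1 - 4 * κ)) / 2 with hγ
  obtain ⟨hγ₀, hγ₁, hγκ⟩ := one_sub_sqrt_one_sub_four_mul_div_two_spec hκ0 hκ1.le hγ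
  intro x₁ hx₁
  rcases Ωᶜ.eq_empty_or_nonempty with hempty | hne
  · obtain ⟨δ, hδ, hbd⟩ := hbdry 1 one_pos
    simpa [hempty, Real.zero_rpow hγ₀.ne'] using hbd x₁ hx₁ (by simpa [hempty] using hδ)
  by_contra! hux₁
  have hd : ∀ x ∈ Ω, 0 < infDist x Ωᶜ := fun x hx =>
    (hΩo.isClosed_compl.notMem_iff_infDist_pos hne).1 (not_not_intro hx)
  obtain ⟨x₀, hx₀, c, hc, hle, heq⟩ := exists_pos_mul_touching_from_above hΩb huC.continuousOn
    (continuousOn_hardyBarrier.comp (continuous_infDist_pt _).continuousOn hd)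
    (fun x hx => hardyBarrier_pos (hd x hx))
    (fun ε hε => (hbdry ε hε).imp fun δ ⟨hδ, h⟩ => ⟨hδ, fun x hx hxδ => (h x hx hxδ).trans
      (mul_le_mul_of_nonneg_left (rpow_le_hardyBarrier infDist_nonneg) hε.le)⟩) hx₁ hux₁
  have hu : ContDiffAt ℝ 2 u x₀ := huC.contDiffAt (hΩo.mem_nhds hx₀)
  have hlap := laplacian_le_of_le_comp_infDist hΩo hΩconv hne hx₀
    (hu.eventually (by simp) |>.mono fun y hy => hy.differentiableAt (by norm_num))
    ((hu.fderiv_right (m := 1) (by norm_num)).differentiableAt (by norm_num))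
    ((concaveOn_hardyBarrier hγ₀.le (by linarith)).smul hc.le)
    (fun s hs t ht hst =>
      mul_le_mul_of_nonneg_left (monotoneOn_hardyBarrier hγ₀.le hs ht hst) hc.le)
    ((eventually_gt_nhds (hd x₀ hx₀)).mono fun t ht => (hasDerivAt_hardyBarrier ht).const_mul c)
    ((hasDerivAt_hardyBarrier_deriv (hd x₀ hx₀)).const_mul c) hle heq
  have hsuper := mul_neg_of_pos_of_neg hc (hardyBarrier_strict_supersolution hγκ hκ1 (hd x₀ hx₀))
  have hx₀sub := hsub x₀ hx₀
  rw [heq, Function.comp_apply, mul_left_comm, mul_div_assoc] at hx₀sub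
  rw [mul_add] at hsuper
  linarith

/-- maximum principle for the Hardy operator `-Δ - κ/d²` with `κ < 1/4`
in a bounded convex domain: a subsolution `u` with
`limsup_{d(x)→0} u(x)/d(x)^{α₋/2} ≤ 0` (uniformly) is nonpositive. -/
theorem stmt_13 {N : ℕ} (hN : 2 ≤ N)
    (Ω : Set (EuclideanSpace ℝ (Fin N))) (hΩo : IsOpen Ω) (hΩb : Bornology.IsBounded Ω)
    (hΩconv : Convex ℝ Ω)
    (β₀ : ℝ) (hβ₀ : 0 < β₀)
    (hdC : ContDiffOn ℝ 2 (fun x => Metric.infDist x Ωᶜ)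
      {x | x ∈ Ω ∧ Metric.infDist x Ωᶜ < β₀})
    (hgrad : ∀ x ∈ {x | x ∈ Ω ∧ Metric.infDist x Ωᶜ < β₀},
      ‖fderiv ℝ (fun y => Metric.infDist y Ωᶜ) x‖ = 1)
    (κ : ℝ) (hκ0 : 0 < κ) (hκ1 : κ < 1 / 4)
    (u : EuclideanSpace ℝ (Fin N) → ℝ) (huC : ContDiffOn ℝ 2 u Ω)
    (hsub : ∀ x ∈ Ω,
      0 ≤ laplacian u x + κ * u x / (Metric.infDist x Ωᶜ) ^ 2)
    (hbdry : ∀ ε : ℝ, 0 < ε → ∃ δ : ℝ, 0 < δ ∧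
      ∀ x ∈ Ω, Metric.infDist x Ωᶜ < δ →
        u x ≤ ε * (Metric.infDist x Ωᶜ) ^ ((1 - Real.sqrt (1 - 4 * κ)) / 2)) :
    ∀ x ∈ Ω, u x ≤ 0 :=
  stmt_13_general Ω hΩo hΩb hΩconv κ hκ0 hκ1 u huC hsub hbdry
end

section
/- Let N ≥ 2, let Ω ⊂ ℝ^N be a bounded convex open set, and suppose there is β₀ > 0 such that d is twice continuously differentiable on {x ∈ Ω : d(x) < β₀} with |∇d| = 1 there. Let u be a continuous C² function on Ω satisfying Δu(x) + u(x)/(4·d(x)²) ≥ 0 for every x ∈ Ω, and assume that for every ε > 0 there exists δ ∈ (0, 1) such that u(x) ≤ ε·√(d(x))·|log d(x)| whenever x ∈ Ω and d(x) < δ. Then u(x) ≤ 0 for every x ∈ Ω. -/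
/-!
Suppose `u > 0` somewhere and let `d` be the distance to the boundary. The profile
`G(s) = √s (L + log L)`, `L = K - log s`, satisfies `G'' + G / (4 s²) = -1 / (L² s^(3/2)) < 0`,
is increasing where `L ≥ 3`, and dominates `√s |log s|` for `s < 1`. The boundary hypothesis
makes `u / G(d)` small near `∂Ω`, so the least multiple `M G(d)` (`M > 0`) lying above `u` touches
it at an interior point `x`. As `d` need not be smooth, compare with `G(t)` instead, `t` being the
distance to the supporting hyperplane at the boundary point nearest to `x`: by convexity `d ≤ t`
on `Ω`, with equality at `x`, so `u - M G(t)` has a local maximum at `x`. Hence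
`Δu(x) ≤ M G''(d(x))`, which contradicts the subsolution inequality at `x`.
-/

open MeasureTheory

open Filter Topology Set Real RealInnerProductSpace Metric

noncomputable def hardyProfile (K s : ℝ) : ℝ :=
  √s * (K - log s + log (K - log s))

noncomputable def hardyProfileDeriv (K s : ℝ) : ℝ :=
  ((K - log s + log (K - log s)) / 2 - 1 - (K - log s)⁻¹) / √s

noncomputable def hardyProfileDeriv2 (K s : ℝ) : ℝ :=
  (-((K - log s) ^ 2)⁻¹ - (K - log s + log (K - log s)) / 4) / (s * √s)

section HardyProfile

variable {K s : ℝ}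

lemma sub_log_pos_of_lt_exp (hs : 0 < s) (hsK : s < exp K) : 0 < K - log s := by
  linarith [(log_lt_iff_lt_exp hs).2 hsK]

lemma three_le_sub_log_of_le_exp (hs : 0 < s) (hsK : s ≤ exp (K - 3)) : 3 ≤ K - log s := by
  linarith [(log_le_iff_le_exp hs).2 hsK]

lemma hasDerivAt_sub_log (hs : 0 < s) : HasDerivAt (fun t => K - log t) (-s⁻¹) s := by
  simpa using (hasDerivAt_log hs.ne').const_sub K

lemma hasDerivAt_sub_log_add_log (hs : 0 < s) (hsK : s < exp K) :
    HasDerivAt (fun t => K - log t + log (K - log t)) (-s⁻¹ * (1 + (K - log s)⁻¹)) s := by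
  refine ((hasDerivAt_sub_log hs).fun_add
    ((hasDerivAt_sub_log hs).log (sub_log_pos_of_lt_exp hs hsK).ne')).congr_deriv ?_
  ring

lemma hasDerivAt_hardyProfile (hs : 0 < s) (hsK : s < exp K) :
    HasDerivAt (hardyProfile K) (hardyProfileDeriv K s) s := by
  refine ((hasDerivAt_sqrt hs.ne').fun_mul (hasDerivAt_sub_log_add_log hs hsK)).congr_deriv ?_
  have hℓ := (sub_log_pos_of_lt_exp hs hsK).ne'
  have hss := (mul_self_sqrt hs.le).symm
  have hr : √s ≠ 0 := (sqrt_pos.2 hs).ne'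
  rw [hardyProfileDeriv]
  set r := √s
  set ℓ := K - log s
  rw [hss]
  field_simp
  ring

lemma hasDerivAt_hardyProfileDeriv (hs : 0 < s) (hsK : s < exp K) :
    HasDerivAt (hardyProfileDeriv K) (hardyProfileDeriv2 K s) s := by
  have hℓ := (sub_log_pos_of_lt_exp hs hsK).ne'
  have hr : √s ≠ 0 := (sqrt_pos.2 hs).ne'
  refine (((((hasDerivAt_sub_log_add_log hs hsK).div_const 2).sub_const 1).fun_sub
    ((hasDerivAt_sub_log hs).fun_inv hℓ)).fun_div (hasDerivAt_sqrt hs.ne') hr).congr_deriv ?_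
  have hss := (mul_self_sqrt hs.le).symm
  rw [hardyProfileDeriv2]
  set r := √s
  set ℓ := K - log s
  rw [hss]
  field_simp
  ring

lemma hardyProfileDeriv2_add_div_eq (hs : 0 < s) (hsK : s < exp K) :
    hardyProfileDeriv2 K s + hardyProfile K s / (4 * s ^ 2) =
      -((K - log s) ^ 2)⁻¹ / (s * √s) := by
  have hℓ := (sub_log_pos_of_lt_exp hs hsK).ne'
  have hr : √s ≠ 0 := (sqrt_pos.2 hs).ne'
  have hss := (mul_self_sqrt hs.le).symm
  rw [hardyProfileDeriv2, hardyProfile]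
  set r := √s
  set ℓ := K - log s
  rw [hss]
  field_simp
  ring

lemma hardyProfileDeriv2_add_div_neg (hs : 0 < s) (hsK : s < exp K) :
    hardyProfileDeriv2 K s + hardyProfile K s / (4 * s ^ 2) < 0 := by
  rw [hardyProfileDeriv2_add_div_eq hs hsK, neg_div]
  have := sub_log_pos_of_lt_exp hs hsK
  have := sqrt_pos.2 hs
  simp only [Left.neg_neg_iff]
  positivity

lemma hardyProfile_pos (hs : 0 < s) (hsK : s ≤ exp (K - 3)) : 0 < hardyProfile K s := by
  have hℓ := three_le_sub_log_of_le_exp hs hsK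
  have := log_nonneg (by linarith : (1 : ℝ) ≤ K - log s)
  exact mul_pos (sqrt_pos.2 hs) (by linarith)

lemma hardyProfileDeriv_nonneg (hs : 0 < s) (hsK : s ≤ exp (K - 3)) :
    0 ≤ hardyProfileDeriv K s := by
  have hℓ := three_le_sub_log_of_le_exp hs hsK
  have := log_nonneg (by linarith : (1 : ℝ) ≤ K - log s)
  have : (K - log s)⁻¹ ≤ 3⁻¹ := inv_anti₀ (by norm_num) hℓ
  exact div_nonneg (by linarith) (sqrt_nonneg s)

lemma monotoneOn_hardyProfile : MonotoneOn (hardyProfile K) (Ioc 0 (exp (K - 3))) := by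
  have hlt : ∀ s ∈ Ioc 0 (exp (K - 3)), s < exp K := fun s hs =>
    hs.2.trans_lt (exp_lt_exp.2 (by linarith))
  have hderiv : ∀ s ∈ Ioc 0 (exp (K - 3)), HasDerivAt (hardyProfile K) (hardyProfileDeriv K s) s :=
    fun s hs => hasDerivAt_hardyProfile hs.1 (hlt s hs)
  refine monotoneOn_of_hasDerivWithinAt_nonneg (convex_Ioc _ _)
    (fun s hs => (hderiv s hs).continuousAt.continuousWithinAt)
    (fun s hs => (hderiv s (interior_subset hs)).hasDerivWithinAt)
    (fun s hs => hardyProfileDeriv_nonneg (interior_subset hs).1 (interior_subset hs).2)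

lemma sqrt_mul_abs_log_le_hardyProfile (hs : 0 ≤ s) (hs1 : s < 1) (hK : 1 ≤ K) :
    √s * |log s| ≤ hardyProfile K s := by
  obtain rfl | hs := hs.eq_or_lt
  · simp [hardyProfile]
  have hlog : log s < 0 := log_neg hs hs1
  have := log_nonneg (by linarith : (1 : ℝ) ≤ K - log s)
  rw [hardyProfile, abs_of_neg hlog]
  exact mul_le_mul_of_nonneg_left (by linarith) (sqrt_nonneg s)

lemma contDiffAt_hardyProfile (hs : 0 < s) (hsK : s < exp K) :
    ContDiffAt ℝ 2 (hardyProfile K) s := by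
  have hℓ : ContDiffAt ℝ 2 (fun t => K - log t) s :=
    contDiffAt_const.sub (contDiffAt_log.2 hs.ne')
  exact (contDiffAt_sqrt hs.ne').mul (hℓ.add (hℓ.log (sub_log_pos_of_lt_exp hs hsK).ne'))

lemma continuousOn_hardyProfile : ContinuousOn (hardyProfile K) (Ioo 0 (exp K)) :=
  fun _ hs => (contDiffAt_hardyProfile hs.1 hs.2).continuousAt.continuousWithinAt

lemma deriv_deriv_hardyProfile (hs : 0 < s) (hsK : s < exp K) :
    deriv (deriv (hardyProfile K)) s = hardyProfileDeriv2 K s := by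
  have hderiv : deriv (hardyProfile K) =ᶠ[𝓝 s] hardyProfileDeriv K := by
    filter_upwards [Ioo_mem_nhds hs hsK] with t ht
    exact (hasDerivAt_hardyProfile ht.1 ht.2).deriv
  rw [hderiv.deriv_eq, (hasDerivAt_hardyProfileDeriv hs hsK).deriv]

end HardyProfile

theorem IsLocalMax.deriv_deriv_nonpos {g : ℝ → ℝ} {a : ℝ} (h : IsLocalMax g a)
    (hc : ContinuousAt g a) : deriv (deriv g) a ≤ 0 := by
  -- No differentiability is needed: if `deriv (deriv g) a > 0`, the second derivative test makes
  -- `a` a local minimum too, so `g` is locally constant and `deriv (deriv g) a = 0`.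
  by_contra! hpos
  have hmin := isLocalMin_of_deriv_deriv_pos hpos h.deriv_eq_zero hc
  have hconst : g =ᶠ[𝓝 a] fun _ => g a := (hmin.and h).mono fun t ht => le_antisymm ht.2 ht.1
  have hderiv : deriv g =ᶠ[𝓝 a] fun _ => 0 :=
    hconst.eventuallyEq_nhds.mono fun t ht => by rw [ht.deriv_eq, deriv_const]
  simp [hderiv.deriv_eq] at hpos

section SecondDerivative

variable {E F : Type*} [NormedAddCommGroup E] [NormedSpace ℝ E]
  [NormedAddCommGroup F] [NormedSpace ℝ F]

theorem ContDiffAt.iteratedFDeriv_two_apply_eq_deriv_deriv {v : E → F} {x : E}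
    (hv : ContDiffAt ℝ 2 v x) (e : E) :
    iteratedFDeriv ℝ 2 v x ![e, e] = deriv (deriv fun t : ℝ => v (x + t • e)) 0 := by
  have hline : ∀ t : ℝ, HasDerivAt (fun t : ℝ => x + t • e) e t := fun t => by
    simpa using ((hasDerivAt_id t).smul_const e).const_add x
  have hline0 : Tendsto (fun t : ℝ => x + t • e) (𝓝 0) (𝓝 x) := by
    simpa using (hline 0).continuousAt.tendsto
  have hderiv : deriv (fun t : ℝ => v (x + t • e)) =ᶠ[𝓝 0]
      fun t => fderiv ℝ v (x + t • e) e := by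
    filter_upwards [hline0.eventually ((hv.eventually (by simp)).mono
      fun y hy => hy.differentiableAt (by norm_num))] with t ht
    exact (ht.hasFDerivAt.comp_hasDerivAt t (hline t)).deriv
  have hfderiv : HasFDerivAt (fderiv ℝ v) (fderiv ℝ (fderiv ℝ v) x) (x + (0 : ℝ) • e) := by
    simpa using ((hv.fderiv_right (m := 1) (by norm_num)).differentiableAt
      (by norm_num)).hasFDerivAt
  rw [iteratedFDeriv_two_apply, hderiv.deriv_eq]
  exact (((ContinuousLinearMap.apply ℝ F e).hasFDerivAt.comp_hasDerivAt 0
    (hfderiv.comp_hasDerivAt 0 (hline 0))).deriv).symm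

theorem IsLocalMax.iteratedFDeriv_two_apply_nonpos {v : E → ℝ} {x : E} (h : IsLocalMax v x)
    (hv : ContDiffAt ℝ 2 v x) (e : E) : iteratedFDeriv ℝ 2 v x ![e, e] ≤ 0 := by
  have hline : Tendsto (fun t : ℝ => x + t • e) (𝓝 0) (𝓝 x) := by
    simpa using (Continuous.tendsto (by fun_prop : Continuous fun t : ℝ => x + t • e) 0)
  rw [hv.iteratedFDeriv_two_apply_eq_deriv_deriv]
  refine IsLocalMax.deriv_deriv_nonpos ?_ ?_
  · simpa [IsLocalMax, IsMaxFilter] using hline.eventually h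
  · simpa [ContinuousAt, Function.comp_def] using hv.continuousAt.tendsto.comp hline

end SecondDerivative

theorem deriv_deriv_comp_const_add_mul (g : ℝ → ℝ) (a b t : ℝ) :
    deriv (deriv fun t => g (a + b * t)) t = b ^ 2 * deriv (deriv g) (a + b * t) := by
  have hderiv : ∀ f : ℝ → ℝ, deriv (fun t => f (a + b * t)) = fun t => b * deriv f (a + b * t) :=
    fun f => funext fun t => by
      rw [deriv_comp_mul_left (f := fun s => f (a + s)), deriv_comp_const_add, smul_eq_mul]
  simp only [hderiv, deriv_const_mul_field', sq, mul_assoc]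

section Laplacian

variable {N : ℕ}

theorem laplacian_nonpos_of_isLocalMax {v : EuclideanSpace ℝ (Fin N) → ℝ}
    {x : EuclideanSpace ℝ (Fin N)} (h : IsLocalMax v x) (hv : ContDiffAt ℝ 2 v x) :
    laplacian v x ≤ 0 :=
  Finset.sum_nonpos fun _ _ => h.iteratedFDeriv_two_apply_nonpos hv _

theorem laplacian_sub_smul {u v : EuclideanSpace ℝ (Fin N) → ℝ} {x : EuclideanSpace ℝ (Fin N)}
    (hu : ContDiffAt ℝ 2 u x) (hv : ContDiffAt ℝ 2 v x) (c : ℝ) :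
    laplacian (u - c • v) x = laplacian u x - c * laplacian v x := by
  simp only [laplacian, Finset.mul_sum, ← Finset.sum_sub_distrib]
  refine Finset.sum_congr rfl fun i _ => ?_
  rw [iteratedFDeriv_sub_apply (g := c • v) hu (hv.const_smul c),
    iteratedFDeriv_const_smul_apply hv]
  rfl

theorem laplacian_comp_inner_add {g : ℝ → ℝ} (w x : EuclideanSpace ℝ (Fin N)) (b : ℝ)
    (hg : ContDiffAt ℝ 2 g (⟪w, x⟫ + b)) :
    laplacian (fun z => g (⟪w, z⟫ + b)) x = ‖w‖ ^ 2 * deriv (deriv g) (⟪w, x⟫ + b) := by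
  have hcomp : ContDiffAt ℝ 2 (fun z => g (⟪w, z⟫ + b)) x :=
    hg.comp x ((contDiff_const.inner ℝ contDiff_id).add contDiff_const).contDiffAt
  have hline : ∀ e : EuclideanSpace ℝ (Fin N),
      (fun t : ℝ => g (⟪w, x + t • e⟫ + b)) = fun t => g ((⟪w, x⟫ + b) + ⟪w, e⟫ * t) :=
    fun e => funext fun t => by rw [inner_add_right, inner_smul_right]; ring_nf
  simp only [laplacian, hcomp.iteratedFDeriv_two_apply_eq_deriv_deriv, hline,
    deriv_deriv_comp_const_add_mul, mul_zero, add_zero, ← Finset.sum_mul,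
    EuclideanSpace.inner_single_right, EuclideanSpace.real_norm_sq_eq]
  simp

end Laplacian

theorem Convex.exists_infDist_compl_le_inner_add_dist {E : Type*} [NormedAddCommGroup E]
    [InnerProductSpace ℝ E] [CompleteSpace E] {Ω : Set E} (hΩc : Convex ℝ Ω) (hΩo : IsOpen Ω)
    {x y : E} (hx : x ∈ Ω) (hy : y ∉ Ω) :
    ∃ w : E, ‖w‖ = 1 ∧ ∀ z ∈ Ω, infDist z Ωᶜ ≤ ⟪w, z - x⟫ + dist x y := by
  obtain ⟨f, hf⟩ := geometric_hahn_banach_open_point hΩc hΩo hy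
  set ν := (InnerProductSpace.toDual ℝ E).symm f
  have hνf : ∀ z, ⟪ν, z⟫ = f z := fun z => InnerProductSpace.toDual_symm_apply
  have hν : 0 < ‖ν‖ := norm_pos_iff.2 fun h => by
    simpa [← hνf, h] using hf x hx
  set n := ‖ν‖⁻¹ • ν
  have hn : ‖n‖ = 1 := by simp [n, norm_smul, hν.ne']
  have hνn : ⟪ν, n⟫ = ‖ν‖ := by
    simp only [n, real_inner_smul_right, real_inner_self_eq_norm_sq]
    field_simp
  refine ⟨-n, by rw [norm_neg, hn], fun z hz => ?_⟩
  -- `z + τ • n` is the foot of the perpendicular from `z` to the hyperplane `{f = f y}`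
  set τ := ⟪n, y - z⟫
  have hτ : τ = ‖ν‖⁻¹ * (f y - f z) := by
    simp only [τ, n, real_inner_smul_left, inner_sub_right, hνf, mul_sub]
  have hτpos : 0 < τ := by rw [hτ]; exact mul_pos (inv_pos.2 hν) (sub_pos.2 (hf z hz))
  have hfoot : z + τ • n ∈ Ωᶜ := fun h => by
    have := hf _ h
    rw [← hνf, ← hνf, inner_add_right, real_inner_smul_right, hνn, hτ, hνf, hνf] at this
    field_simp at this
    linarith
  calc infDist z Ωᶜ ≤ dist z (z + τ • n) := infDist_le_dist_of_mem hfoot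
    _ = τ := by rw [dist_self_add_right, norm_smul, hn, mul_one, norm_of_nonneg hτpos.le]
    _ = ⟪-n, z - x⟫ + ⟪n, y - x⟫ := by
      simp only [τ, inner_neg_left, inner_sub_right]; ring
    _ ≤ ⟪-n, z - x⟫ + dist x y := by
      have := real_inner_le_norm n (y - x)
      rw [hn, one_mul, ← dist_eq_norm, dist_comm] at this
      linarith

theorem Convex.exists_infDist_compl_le_inner_add {E : Type*} [NormedAddCommGroup E]
    [InnerProductSpace ℝ E] [ProperSpace E] {Ω : Set E} (hΩc : Convex ℝ Ω) (hΩo : IsOpen Ω)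
    (hne : Ωᶜ.Nonempty) {x : E} (hx : x ∈ Ω) :
    ∃ w : E, ‖w‖ = 1 ∧ ∀ z ∈ Ω, infDist z Ωᶜ ≤ ⟪w, z - x⟫ + infDist x Ωᶜ := by
  obtain ⟨y, hy, hxy⟩ := hΩo.isClosed_compl.exists_infDist_eq_dist hne x
  rw [hxy]
  exact hΩc.exists_infDist_compl_le_inner_add_dist hΩo hx hy

theorem exists_pos_dominating_multiple_touching {X : Type*} [TopologicalSpace X] {Ω : Set X}
    {u Φ : X → ℝ} (hu : ContinuousOn u Ω) (hΦ : ContinuousOn Φ Ω)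
    (hΦpos : ∀ x ∈ Ω, 0 < Φ x)
    (hbdry : ∀ ε > 0, ∃ C ⊆ Ω, IsCompact C ∧ ∀ x ∈ Ω \ C, u x ≤ ε * Φ x)
    {x₀ : X} (hx₀ : x₀ ∈ Ω) (hux₀ : 0 < u x₀) :
    ∃ M > 0, ∃ x ∈ Ω, u x = M * Φ x ∧ ∀ z ∈ Ω, u z ≤ M * Φ z := by
  set m := u x₀ / Φ x₀
  have hm : 0 < m := div_pos hux₀ (hΦpos x₀ hx₀)
  obtain ⟨C, hCΩ, hC, hCu⟩ := hbdry (m / 2) (half_pos hm)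
  have hx₀C : x₀ ∈ C := by
    by_contra h
    have := hCu x₀ ⟨hx₀, h⟩
    rw [← div_le_iff₀ (hΦpos x₀ hx₀)] at this
    linarith
  obtain ⟨x, hxC, hxmax⟩ := hC.exists_isMaxOn ⟨x₀, hx₀C⟩
    ((hu.mono hCΩ).div (hΦ.mono hCΩ) fun z hz => (hΦpos z (hCΩ hz)).ne')
  have hmM : m ≤ u x / Φ x := hxmax hx₀C
  refine ⟨u x / Φ x, hm.trans_le hmM, x, hCΩ hxC,
    (div_mul_cancel₀ _ (hΦpos x (hCΩ hxC)).ne').symm, fun z hz => ?_⟩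
  by_cases hzC : z ∈ C
  · exact (div_le_iff₀ (hΦpos z hz)).1 (hxmax hzC)
  · calc u z ≤ m / 2 * Φ z := hCu z ⟨hz, hzC⟩
      _ ≤ u x / Φ x * Φ z := mul_le_mul_of_nonneg_right (by linarith) (hΦpos z hz).le

theorem Bornology.IsBounded.exists_dist_add_infDist_compl_le {X : Type*} [PseudoMetricSpace X]
    {Ω : Set X} (hΩb : Bornology.IsBounded Ω) (hne : Ωᶜ.Nonempty) :
    ∃ S, 1 ≤ S ∧ ∀ x ∈ Ω, ∀ z ∈ Ω, dist z x + infDist x Ωᶜ ≤ S := by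
  obtain ⟨p, hp⟩ := hne
  obtain ⟨R, hR⟩ := hΩb.subset_closedBall p
  refine ⟨max 1 (3 * R), le_max_left _ _, fun x hx z hz => ?_⟩
  have hxp : dist x p ≤ R := hR hx
  have hzp : dist z p ≤ R := hR hz
  have := infDist_le_dist_of_mem hp (x := x)
  have := dist_triangle_right z x p
  linarith [le_max_right 1 (3 * R)]

theorem IsOpen.infDist_compl_pos {X : Type*} [PseudoMetricSpace X] {Ω : Set X}
    (hΩo : IsOpen Ω) (hne : Ωᶜ.Nonempty) {x : X} (hx : x ∈ Ω) : 0 < infDist x Ωᶜ :=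
  (hΩo.isClosed_compl.notMem_iff_infDist_pos hne).1 (not_not.2 hx)

theorem setOf_le_infDist_compl_subset {X : Type*} [PseudoMetricSpace X] {Ω : Set X} {δ : ℝ}
    (hδ : 0 < δ) : {x | δ ≤ infDist x Ωᶜ} ⊆ Ω := fun _ hx =>
  not_not.1 fun h => (hδ.trans_le hx).ne' (infDist_zero_of_mem h)

theorem Bornology.IsBounded.isCompact_setOf_le_infDist_compl {X : Type*} [PseudoMetricSpace X]
    [ProperSpace X] {Ω : Set X} (hΩb : Bornology.IsBounded Ω) {δ : ℝ} (hδ : 0 < δ) :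
    IsCompact {x | δ ≤ infDist x Ωᶜ} :=
  isCompact_of_isClosed_isBounded (isClosed_le continuous_const (continuous_infDist_pt _))
    (hΩb.subset (setOf_le_infDist_compl_subset hδ))

theorem exists_isCompact_forall_le_mul_hardyProfile {X : Type*} [PseudoMetricSpace X]
    [ProperSpace X] {Ω : Set X} (hΩb : Bornology.IsBounded Ω) {u : X → ℝ} {K ε δ : ℝ}
    (hK : 1 ≤ K) (hε : 0 ≤ ε) (hδ : 0 < δ) (hδ1 : δ < 1)
    (hu : ∀ x ∈ Ω, infDist x Ωᶜ < δ → u x ≤ ε * √(infDist x Ωᶜ) * |log (infDist x Ωᶜ)|) :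
    ∃ C ⊆ Ω, IsCompact C ∧ ∀ x ∈ Ω \ C, u x ≤ ε * hardyProfile K (infDist x Ωᶜ) := by
  refine ⟨_, setOf_le_infDist_compl_subset hδ, hΩb.isCompact_setOf_le_infDist_compl hδ,
    fun x hx => ?_⟩
  have hxδ : infDist x Ωᶜ < δ := not_le.1 hx.2
  calc u x ≤ ε * (√(infDist x Ωᶜ) * |log (infDist x Ωᶜ)|) := by
        rw [← mul_assoc]; exact hu x hx.1 hxδ
    _ ≤ ε * hardyProfile K (infDist x Ωᶜ) := mul_le_mul_of_nonneg_left
        (sqrt_mul_abs_log_le_hardyProfile infDist_nonneg (hxδ.trans hδ1) hK) hε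

theorem laplacian_add_div_neg_of_touching_hardyProfile {N : ℕ} {Ω : Set (EuclideanSpace ℝ (Fin N))}
    (hΩo : IsOpen Ω) (hΩc : Convex ℝ Ω) (hne : Ωᶜ.Nonempty) {u : EuclideanSpace ℝ (Fin N) → ℝ}
    (hu : ContDiffOn ℝ 2 u Ω) {K M : ℝ} (hM : 0 < M) {x : EuclideanSpace ℝ (Fin N)}
    (hx : x ∈ Ω) (hK : ∀ z ∈ Ω, dist z x + infDist x Ωᶜ ≤ exp (K - 3))
    (hle : ∀ z ∈ Ω, u z ≤ M * hardyProfile K (infDist z Ωᶜ))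
    (heq : u x = M * hardyProfile K (infDist x Ωᶜ)) :
    laplacian u x + u x / (4 * infDist x Ωᶜ ^ 2) < 0 := by
  have hd_pos : ∀ z ∈ Ω, 0 < infDist z Ωᶜ := fun _ hz => hΩo.infDist_compl_pos hne hz
  obtain ⟨w, hw, hwΩ⟩ := hΩc.exists_infDist_compl_le_inner_add hΩo hne hx
  set b := infDist x Ωᶜ - ⟪w, x⟫ with hb
  have htouch : ⟪w, x⟫ + b = infDist x Ωᶜ := by ring
  have hxK : infDist x Ωᶜ < exp K :=
    (by simpa using hK x hx : infDist x Ωᶜ ≤ exp (K - 3)).trans_lt (exp_lt_exp.2 (by linarith))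
  have hbarrier : ∀ z ∈ Ω,
      hardyProfile K (infDist z Ωᶜ) ≤ hardyProfile K (⟪w, z⟫ + b) := fun z hz => by
    have hdt : infDist z Ωᶜ ≤ ⟪w, z⟫ + b := by
      linarith [hwΩ z hz, inner_sub_right (𝕜 := ℝ) w z x]
    have htK : ⟪w, z⟫ + b ≤ exp (K - 3) := by
      have := real_inner_le_norm w (z - x)
      rw [hw, one_mul, ← dist_eq_norm] at this
      linarith [hK z hz, inner_sub_right (𝕜 := ℝ) w z x]
    exact monotoneOn_hardyProfile ⟨hd_pos z hz, hdt.trans htK⟩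
      ⟨(hd_pos z hz).trans_le hdt, htK⟩ hdt
  set v := u - M • fun z => hardyProfile K (⟪w, z⟫ + b)
  have hmax : IsLocalMax v x := by
    filter_upwards [hΩo.mem_nhds hx] with z hz
    have := mul_le_mul_of_nonneg_left (hbarrier z hz) hM.le
    simp only [v, Pi.sub_apply, Pi.smul_apply, smul_eq_mul, htouch, heq, sub_self]
    linarith [hle z hz]
  have hG : ContDiffAt ℝ 2 (hardyProfile K) (⟪w, x⟫ + b) := by
    rw [htouch]; exact contDiffAt_hardyProfile (hd_pos x hx) hxK
  have hbarC : ContDiffAt ℝ 2 (fun z => hardyProfile K (⟪w, z⟫ + b)) x :=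
    hG.comp x ((contDiff_const.inner ℝ contDiff_id).add contDiff_const).contDiffAt
  have hux : ContDiffAt ℝ 2 u x := hu.contDiffAt (hΩo.mem_nhds hx)
  have hlap := laplacian_nonpos_of_isLocalMax hmax (hux.sub (hbarC.const_smul M))
  rw [laplacian_sub_smul hux hbarC, laplacian_comp_inner_add w x b hG, hw, htouch,
    deriv_deriv_hardyProfile (hd_pos x hx) hxK, one_pow, one_mul] at hlap
  have hsuper := mul_neg_of_pos_of_neg hM (hardyProfileDeriv2_add_div_neg (hd_pos x hx) hxK)
  rw [heq, mul_div_assoc]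
  linarith

theorem stmt_14_general {N : ℕ}
    (Ω : Set (EuclideanSpace ℝ (Fin N))) (hΩo : IsOpen Ω) (hΩb : Bornology.IsBounded Ω)
    (hΩconv : Convex ℝ Ω)
    (u : EuclideanSpace ℝ (Fin N) → ℝ) (huC : ContDiffOn ℝ 2 u Ω)
    (hsub : ∀ x ∈ Ω,
      0 ≤ laplacian u x + u x / (4 * (Metric.infDist x Ωᶜ) ^ 2))
    (hbdry : ∀ ε : ℝ, 0 < ε → ∃ δ : ℝ, 0 < δ ∧ δ < 1 ∧
      ∀ x ∈ Ω, Metric.infDist x Ωᶜ < δ →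
        u x ≤ ε * Real.sqrt (Metric.infDist x Ωᶜ)
          * |Real.log (Metric.infDist x Ωᶜ)|) :
    ∀ x ∈ Ω, u x ≤ 0 := by
  intro x₀ hx₀
  obtain hempty | hne := Ωᶜ.eq_empty_or_nonempty
  · obtain ⟨δ, hδ, -, hδu⟩ := hbdry 1 one_pos
    simpa [hempty] using hδu x₀ hx₀ (by simpa [hempty] using hδ)
  by_contra! hpos
  obtain ⟨S, hS1, hS⟩ := hΩb.exists_dist_add_infDist_compl_le hne
  set K := 3 + log S
  have hKS : exp (K - 3) = S := by simp [K, exp_log (zero_lt_one.trans_le hS1)]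
  have hd_pos : ∀ z ∈ Ω, 0 < infDist z Ωᶜ := fun _ hz => hΩo.infDist_compl_pos hne hz
  have hd_le : ∀ z ∈ Ω, infDist z Ωᶜ ≤ exp (K - 3) := fun z hz => by
    simpa [hKS] using hS z hz z hz
  have hΦ : ContinuousOn (fun z => hardyProfile K (infDist z Ωᶜ)) Ω :=
    continuousOn_hardyProfile.comp (continuous_infDist_pt _).continuousOn fun z hz =>
      ⟨hd_pos z hz, (hd_le z hz).trans_lt (exp_lt_exp.2 (by linarith))⟩
  have hsmall : ∀ ε > 0, ∃ C ⊆ Ω, IsCompact C ∧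
      ∀ x ∈ Ω \ C, u x ≤ ε * hardyProfile K (infDist x Ωᶜ) := fun ε hε => by
    obtain ⟨δ, hδ, hδ1, hu⟩ := hbdry ε hε
    exact exists_isCompact_forall_le_mul_hardyProfile hΩb
      (by linarith [log_nonneg hS1]) hε.le hδ hδ1 hu
  obtain ⟨M, hM, xs, hxs, heq, hle⟩ := exists_pos_dominating_multiple_touching huC.continuousOn
    hΦ (fun z hz => hardyProfile_pos (hd_pos z hz) (hd_le z hz)) hsmall hx₀ hpos
  have hxsK : ∀ z ∈ Ω, dist z xs + infDist xs Ωᶜ ≤ exp (K - 3) := by rw [hKS]; exact hS xs hxs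
  exact (laplacian_add_div_neg_of_touching_hardyProfile hΩo hΩconv hne huC hM hxs hxsK hle
    heq).not_ge (hsub xs hxs)

/-- maximum principle for the critical Hardy operator `-Δ - 1/(4d²)` in a
bounded convex domain: a subsolution `u` with
`limsup_{d(x)→0} u(x)/(√(d(x)) |log d(x)|) ≤ 0` (uniformly) is nonpositive. -/
theorem stmt_14 {N : ℕ} (hN : 2 ≤ N)
    (Ω : Set (EuclideanSpace ℝ (Fin N))) (hΩo : IsOpen Ω) (hΩb : Bornology.IsBounded Ω)
    (hΩconv : Convex ℝ Ω)
    (β₀ : ℝ) (hβ₀ : 0 < β₀)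
    (hdC : ContDiffOn ℝ 2 (fun x => Metric.infDist x Ωᶜ)
      {x | x ∈ Ω ∧ Metric.infDist x Ωᶜ < β₀})
    (hgrad : ∀ x ∈ {x | x ∈ Ω ∧ Metric.infDist x Ωᶜ < β₀},
      ‖fderiv ℝ (fun y => Metric.infDist y Ωᶜ) x‖ = 1)
    (u : EuclideanSpace ℝ (Fin N) → ℝ) (huC : ContDiffOn ℝ 2 u Ω)
    (hsub : ∀ x ∈ Ω,
      0 ≤ laplacian u x + u x / (4 * (Metric.infDist x Ωᶜ) ^ 2))
    (hbdry : ∀ ε : ℝ, 0 < ε → ∃ δ : ℝ, 0 < δ ∧ δ < 1 ∧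
      ∀ x ∈ Ω, Metric.infDist x Ωᶜ < δ →
        u x ≤ ε * Real.sqrt (Metric.infDist x Ωᶜ)
          * |Real.log (Metric.infDist x Ωᶜ)|) :
    ∀ x ∈ Ω, u x ≤ 0 :=
  stmt_14_general Ω hΩo hΩb hΩconv u huC hsub hbdry
end

section
/- Let N ≥ 3, let Ω ⊂ ℝ^N be a bounded open set with 0 ∈ ∂Ω, let 0 < κ ≤ 1/4, set α = α₊ = 1 + √(1 − 4κ), and let 1 < q < q_c where q_c = (N + α/2)/(N − 2 + α/2). Define K̃(x) = d(x)^{α/2}·|x|^{2 − N − α} for x ∈ Ω and G̃(x, y) = min{ |x − y|^{2−N}, d(x)^{α/2}·d(y)^{α/2}·|x − y|^{2 − N − α} } for x ≠ y in Ω. Then ∫_Ω G̃(x, y)·K̃(y)^q dy is finite for x ∈ Ω and lim_{x → 0, x ∈ Ω} (∫_Ω G̃(x, y)·K̃(y)^q dy)/K̃(x) = 0; that is, for every ε > 0 there exists δ > 0 such that ∫_Ω G̃(x, y)·K̃(y)^q dy ≤ ε·K̃(x) for all x ∈ Ω with |x| < δ. -/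
/-!
Dropping the first term of the minimum in `G̃` and using `d(y) ≤ |y|`, the integrand is at most
`d(x)^{α/2} |x - y|^b |y|^a` with `b = 2 - N - α` and `a = α/2 + q (2 - N - α/2)`; the condition
`q < q_c` says exactly `a > -N`. Fix `c` with `max(-N, a + b) < c < min(a, b)`. Splitting into the
regions `|x - y| ≤ |x|/2`, `|y| ≤ 2|x|` and `|y| > 2|x|` gives
`|x - y|^b |y|^a ≲ |x|^{a + b - c} (|x - y|^c + |y|^c)`, and since `c > -N` the integral of the
last factor over the bounded set `Ω` is bounded uniformly in `x`. Hence the potential is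
`O(|x|^{a - c} K̃(x))` with `a - c > 0`.
-/

open MeasureTheory Metric Module Real

lemma rpow_mul_rpow_le_of_two_mul_le {a b c t u v : ℝ} (ha : a ≤ 0) (hb : b ≠ 0)
    (hcb : c ≤ b) (ht : 0 < t) (hu : 0 ≤ u) (hut : 2 * u ≤ t) (htv : t ≤ 2 * v) :
    u ^ b * v ^ a ≤ 2 ^ (c - a - b) * t ^ (a + b - c) * u ^ c := by
  have hu' : u ^ (b - c) ≤ (t / 2) ^ (b - c) := rpow_le_rpow hu (by linarith) (by linarith)
  have hv' : v ^ a ≤ (t / 2) ^ a := rpow_le_rpow_of_nonpos (by positivity) (by linarith) ha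
  calc u ^ b * v ^ a = u ^ (b - c) * v ^ a * u ^ c := by
        rw [mul_right_comm, ← rpow_add' hu (by simpa using hb), sub_add_cancel]
    _ ≤ (t / 2) ^ (b - c) * (t / 2) ^ a * u ^ c :=
        mul_le_mul_of_nonneg_right (mul_le_mul hu' hv' (rpow_nonneg (by linarith) a)
          (by positivity)) (rpow_nonneg hu c)
    _ = 2 ^ (c - a - b) * t ^ (a + b - c) * u ^ c := by
        rw [← rpow_add (by positivity), div_rpow ht.le zero_le_two,
          show c - a - b = -(b - c + a) by ring, rpow_neg zero_le_two]
        ring_nf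

lemma rpow_mul_rpow_le_of_le_two_mul {a b c t u v : ℝ} (ha : a ≠ 0) (hb : b ≤ 0)
    (hca : c ≤ a) (ht : 0 < t) (hv : 0 ≤ v) (htu : t ≤ 2 * u) (hvt : v ≤ 2 * t) :
    u ^ b * v ^ a ≤ 2 ^ (a - b - c) * t ^ (a + b - c) * v ^ c := by
  have hu' : u ^ b ≤ (t / 2) ^ b := rpow_le_rpow_of_nonpos (by positivity) (by linarith) hb
  have hv' : v ^ (a - c) ≤ (2 * t) ^ (a - c) := rpow_le_rpow hv hvt (by linarith)
  calc u ^ b * v ^ a = u ^ b * v ^ (a - c) * v ^ c := by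
        rw [mul_assoc, ← rpow_add' hv (by simpa using ha), sub_add_cancel]
    _ ≤ (t / 2) ^ b * (2 * t) ^ (a - c) * v ^ c :=
        mul_le_mul_of_nonneg_right (mul_le_mul hu' hv' (rpow_nonneg hv _) (by positivity))
          (rpow_nonneg hv c)
    _ = 2 ^ (a - b - c) * t ^ (a + b - c) * v ^ c := by
        rw [div_rpow ht.le zero_le_two, mul_rpow zero_le_two ht.le,
          show a + b - c = b + (a - c) by ring, rpow_add ht,
          show a - b - c = -b + (a - c) by ring, rpow_add zero_lt_two, rpow_neg zero_le_two]
        field_simp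

lemma rpow_mul_rpow_le_of_two_mul_lt {a b c t u v : ℝ} (hb : b ≤ 0) (habc : a + b ≤ c)
    (ht : 0 < t) (htv : 2 * t < v) (hvu : v ≤ t + u) :
    u ^ b * v ^ a ≤ 2 ^ (a - c) * t ^ (a + b - c) * v ^ c := by
  have hv : 0 < v := by linarith
  have hu' : u ^ b ≤ (v / 2) ^ b := rpow_le_rpow_of_nonpos (by positivity) (by linarith) hb
  have hv' : v ^ (a + b - c) ≤ (2 * t) ^ (a + b - c) :=
    rpow_le_rpow_of_nonpos (by positivity) htv.le (by linarith)
  calc u ^ b * v ^ a ≤ (v / 2) ^ b * v ^ a := mul_le_mul_of_nonneg_right hu' (by positivity)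
    _ = 2 ^ (-b) * v ^ (a + b - c) * v ^ c := by
        rw [div_rpow hv.le zero_le_two, rpow_neg zero_le_two, mul_assoc, ← rpow_add hv,
          sub_add_cancel, rpow_add hv]
        ring
    _ ≤ 2 ^ (-b) * (2 * t) ^ (a + b - c) * v ^ c := by gcongr
    _ = 2 ^ (a - c) * t ^ (a + b - c) * v ^ c := by
        rw [mul_rpow zero_le_two ht.le, ← mul_assoc, ← rpow_add zero_lt_two]
        ring_nf

lemma exists_rpow_mul_rpow_le {a b c : ℝ} (habc : a + b < c) (hca : c ≤ a) (hcb : c ≤ b) :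
    ∃ K, 0 ≤ K ∧ ∀ t u v : ℝ, 0 < t → 0 ≤ u → 0 ≤ v → t ≤ u + v → v ≤ t + u →
      u ^ b * v ^ a ≤ K * t ^ (a + b - c) * (u ^ c + v ^ c) := by
  have h2 : ∀ e : ℝ, 0 < (2 : ℝ) ^ e := fun e => by positivity
  set K : ℝ := 2 ^ (c - a - b) + 2 ^ (a - b - c) + 2 ^ (a - c)
  refine ⟨K, by positivity, fun t u v ht hu hv htuv hvtu => ?_⟩
  have hweaken : ∀ e w : ℝ, (2 : ℝ) ^ e ≤ K → 0 ≤ w → w ≤ u ^ c + v ^ c →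
      2 ^ e * t ^ (a + b - c) * w ≤ K * t ^ (a + b - c) * (u ^ c + v ^ c) := by
    intro e w he hw hwuv
    gcongr
  have hu_le : u ^ c ≤ u ^ c + v ^ c := le_add_of_nonneg_right (rpow_nonneg hv c)
  have hv_le : v ^ c ≤ u ^ c + v ^ c := le_add_of_nonneg_left (rpow_nonneg hu c)
  rcases le_or_gt (2 * u) t with hut | htu
  · exact (rpow_mul_rpow_le_of_two_mul_le (by linarith) (by linarith) hcb ht hu hut
      (by linarith)).trans (hweaken (c - a - b) _ (by linarith [h2 (a - b - c), h2 (a - c)])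
        (rpow_nonneg hu c) hu_le)
  rcases le_or_gt v (2 * t) with hvt | htv
  · exact (rpow_mul_rpow_le_of_le_two_mul (by linarith) (by linarith) hca ht hv htu.le
      hvt).trans (hweaken (a - b - c) _ (by linarith [h2 (c - a - b), h2 (a - c)])
        (rpow_nonneg hv c) hv_le)
  · exact (rpow_mul_rpow_le_of_two_mul_lt (by linarith) habc.le ht htv hvtu).trans
      (hweaken (a - c) _ (by linarith [h2 (c - a - b), h2 (a - b - c)]) (rpow_nonneg hv c) hv_le)

lemma mul_rpow_mul_rpow_le {s q b dx dy u v : ℝ} (hs : 0 ≤ s) (hq : 0 ≤ q) (hdx : 0 ≤ dx)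
    (hdy : 0 ≤ dy) (hu : 0 ≤ u) (hv : 0 < v) (hdyv : dy ≤ v) :
    dx ^ s * dy ^ s * u ^ b * (dy ^ s * v ^ b) ^ q ≤
      dx ^ s * (u ^ b * v ^ (s + s * q + b * q)) := by
  have hdy' : dy ^ (s + s * q) ≤ v ^ (s + s * q) := rpow_le_rpow hdy hdyv (by positivity)
  calc dx ^ s * dy ^ s * u ^ b * (dy ^ s * v ^ b) ^ q
      = dx ^ s * (u ^ b * (dy ^ (s + s * q) * v ^ (b * q))) := by
        rw [mul_rpow (rpow_nonneg hdy s) (rpow_nonneg hv.le b), ← rpow_mul hdy,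
          ← rpow_mul hv.le, rpow_add_of_nonneg hdy hs (by positivity)]
        ring
    _ ≤ dx ^ s * (u ^ b * (v ^ (s + s * q) * v ^ (b * q))) := by gcongr
    _ = dx ^ s * (u ^ b * v ^ (s + s * q + b * q)) := by rw [← rpow_add hv]

lemma one_add_sqrt_one_sub_mul_lt_two {κ : ℝ} (hκ : 0 < κ) : 1 + √(1 - 4 * κ) < 2 := by
  linarith [(sqrt_lt' one_pos).2 (by linarith : 1 - 4 * κ < 1 ^ 2)]

lemma exists_pos_forall_mul_rpow_le (M : ℝ) {p ε : ℝ} (hp : 0 < p) (hε : 0 < ε) :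
    ∃ δ > 0, ∀ t : ℝ, 0 ≤ t → t < δ → M * t ^ p ≤ ε := by
  have hlim : Filter.Tendsto (fun t : ℝ => M * t ^ p) (nhds 0) (nhds 0) := by
    simpa [zero_rpow hp.ne'] using ((continuous_rpow_const hp.le).tendsto 0).const_mul M
  obtain ⟨δ, hδ, hδε⟩ := Metric.tendsto_nhds_nhds.1 hlim ε hε
  refine ⟨δ, hδ, fun t ht htδ => ?_⟩
  have hMt := hδε (show dist t 0 < δ by rwa [dist_zero_right, norm_of_nonneg ht])
  rw [dist_zero_right] at hMt
  exact (le_abs_self _).trans hMt.le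

lemma preimage_sub_left_ball {E : Type*} [SeminormedAddCommGroup E] (x : E) (r : ℝ) :
    (fun y => x - y) ⁻¹' ball 0 r = ball x r := by
  ext y
  simp [dist_eq_norm, norm_sub_rev]

lemma green_mul_martin_rpow_le {E : Type*} [NormedAddCommGroup E] {Ω : Set E} (h0 : (0 : E) ∉ Ω)
    {m s b q a c K : ℝ} (hs : 0 ≤ s) (hq : 0 ≤ q) (ha : s + s * q + b * q = a)
    (hK : ∀ t u v : ℝ, 0 < t → 0 ≤ u → 0 ≤ v → t ≤ u + v → v ≤ t + u →
      u ^ b * v ^ a ≤ K * t ^ (a + b - c) * (u ^ c + v ^ c))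
    {x y : E} (hx : x ∈ Ω) (hy : y ∈ Ω) :
    min (‖x - y‖ ^ m) (infDist x Ωᶜ ^ s * infDist y Ωᶜ ^ s * ‖x - y‖ ^ b) *
        (infDist y Ωᶜ ^ s * ‖y‖ ^ b) ^ q ≤
      infDist x Ωᶜ ^ s * (K * ‖x‖ ^ (a + b - c)) * (‖x - y‖ ^ c + ‖y‖ ^ c) := by
  have hx0 : 0 < ‖x‖ := norm_pos_iff.2 (ne_of_mem_of_not_mem hx h0)
  have hy0 : 0 < ‖y‖ := norm_pos_iff.2 (ne_of_mem_of_not_mem hy h0)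
  have hdy : infDist y Ωᶜ ≤ ‖y‖ := by
    simpa using infDist_le_dist_of_mem (x := y) (show (0 : E) ∈ Ωᶜ from h0)
  calc _ ≤ infDist x Ωᶜ ^ s * infDist y Ωᶜ ^ s * ‖x - y‖ ^ b *
        (infDist y Ωᶜ ^ s * ‖y‖ ^ b) ^ q :=
        mul_le_mul_of_nonneg_right (min_le_right _ _)
          (rpow_nonneg (mul_nonneg (rpow_nonneg infDist_nonneg _) (rpow_nonneg hy0.le _)) _)
    _ ≤ infDist x Ωᶜ ^ s * (‖x - y‖ ^ b * ‖y‖ ^ a) := by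
        rw [← ha]
        exact mul_rpow_mul_rpow_le hs hq infDist_nonneg infDist_nonneg (norm_nonneg _) hy0 hdy
    _ ≤ infDist x Ωᶜ ^ s * (K * ‖x‖ ^ (a + b - c)) * (‖x - y‖ ^ c + ‖y‖ ^ c) := by
        rw [mul_assoc]
        exact mul_le_mul_of_nonneg_left (hK _ _ _ hx0 (norm_nonneg _) hy0.le
          (norm_le_norm_sub_add x y) (norm_le_norm_add_norm_sub x y)) (rpow_nonneg infDist_nonneg _)

lemma green_mul_martin_rpow_nonneg {E : Type*} [SeminormedAddCommGroup E] (Ω : Set E)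
    (m s b q : ℝ) (x y : E) :
    0 ≤ min (‖x - y‖ ^ m) (infDist x Ωᶜ ^ s * infDist y Ωᶜ ^ s * ‖x - y‖ ^ b) *
      (infDist y Ωᶜ ^ s * ‖y‖ ^ b) ^ q := by
  have hd : ∀ z, 0 ≤ infDist z Ωᶜ ^ s := fun z => rpow_nonneg infDist_nonneg s
  exact mul_nonneg (le_min (rpow_nonneg (norm_nonneg _) _)
    (mul_nonneg (mul_nonneg (hd x) (hd y)) (rpow_nonneg (norm_nonneg _) _)))
    (rpow_nonneg (mul_nonneg (hd y) (rpow_nonneg (norm_nonneg _) _)) _)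

section Potential

variable {E : Type*} [NormedAddCommGroup E] [NormedSpace ℝ E] [FiniteDimensional ℝ E]
  [MeasurableSpace E] [BorelSpace E] {μ : Measure E} [μ.IsAddHaarMeasure] {c : ℝ}

lemma locallyIntegrable_norm_rpow (hdim : 1 ≤ finrank ℝ E) (hc : -(finrank ℝ E : ℝ) < c) :
    LocallyIntegrable (fun z : E => ‖z‖ ^ c) μ :=
  locallyIntegrable_of_norm_le_rpow hdim (C := 1) (α := -c) (by linarith)
    (ae_of_all _ fun z => by simp [norm_of_nonneg (rpow_nonneg (norm_nonneg z) c)])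
    (measurable_norm.pow_const c).aestronglyMeasurable

lemma integrableOn_norm_sub_rpow_of_subset_ball (hdim : 1 ≤ finrank ℝ E)
    (hc : -(finrank ℝ E : ℝ) < c) {x : E} {r : ℝ} {s : Set E} (hs : s ⊆ ball x r) :
    IntegrableOn (fun y => ‖x - y‖ ^ c) s μ := by
  have hball : IntegrableOn (fun z : E => ‖z‖ ^ c) (ball 0 r) μ :=
    ((locallyIntegrable_norm_rpow hdim hc).integrableOn_isCompact
      (isCompact_closedBall 0 r)).mono_set ball_subset_closedBall
  rw [← (Measure.measurePreserving_sub_left μ x).integrableOn_comp_preimage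
    (MeasurableEquiv.subLeft x).measurableEmbedding, preimage_sub_left_ball] at hball
  exact hball.mono_set hs

lemma setIntegral_norm_sub_rpow_le_of_subset_ball (hdim : 1 ≤ finrank ℝ E)
    (hc : -(finrank ℝ E : ℝ) < c) {x : E} {r : ℝ} {s : Set E} (hs : s ⊆ ball x r) :
    ∫ y in s, ‖x - y‖ ^ c ∂μ ≤ ∫ z in ball 0 r, ‖z‖ ^ c ∂μ := by
  calc ∫ y in s, ‖x - y‖ ^ c ∂μ ≤ ∫ y in ball x r, ‖x - y‖ ^ c ∂μ :=
        setIntegral_mono_set (integrableOn_norm_sub_rpow_of_subset_ball hdim hc subset_rfl)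
          (ae_of_all _ fun y => rpow_nonneg (norm_nonneg _) c) hs.eventuallyLE
    _ = ∫ z in ball 0 r, ‖z‖ ^ c ∂μ := by
        rw [← preimage_sub_left_ball x r]
        exact (Measure.measurePreserving_sub_left μ x).setIntegral_preimage_emb
          (MeasurableEquiv.subLeft x).measurableEmbedding (fun z => ‖z‖ ^ c) (ball 0 r)

theorem exists_setIntegral_green_mul_martin_rpow_le (hdim : 1 ≤ finrank ℝ E) {Ω : Set E}
    (hΩm : MeasurableSet Ω) (hΩb : Bornology.IsBounded Ω) (h0 : (0 : E) ∉ Ω)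
    {m s b q a : ℝ} (hs : 0 ≤ s) (hq : 0 ≤ q) (ha : s + s * q + b * q = a)
    (hc : -(finrank ℝ E : ℝ) < c) (habc : a + b < c) (hca : c ≤ a) (hcb : c ≤ b) :
    ∃ M, ∀ x ∈ Ω,
      IntegrableOn (fun y => min (‖x - y‖ ^ m)
        (infDist x Ωᶜ ^ s * infDist y Ωᶜ ^ s * ‖x - y‖ ^ b) *
          (infDist y Ωᶜ ^ s * ‖y‖ ^ b) ^ q) Ω μ ∧
      ∫ y in Ω, min (‖x - y‖ ^ m) (infDist x Ωᶜ ^ s * infDist y Ωᶜ ^ s * ‖x - y‖ ^ b) *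
          (infDist y Ωᶜ ^ s * ‖y‖ ^ b) ^ q ∂μ ≤
        M * ‖x‖ ^ (a - c) * (infDist x Ωᶜ ^ s * ‖x‖ ^ b) := by
  obtain ⟨R, hR⟩ := hΩb.subset_ball 0
  obtain ⟨K, hK0, hK⟩ := exists_rpow_mul_rpow_le habc hca hcb
  set I := ∫ z in ball (0 : E) (2 * R), ‖z‖ ^ c ∂μ
  refine ⟨K * (2 * I), fun x hx => ?_⟩
  have hx0 : 0 < ‖x‖ := norm_pos_iff.2 (ne_of_mem_of_not_mem hx h0)
  have hRx : dist x 0 < R := hR hx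
  have hΩx : Ω ⊆ ball x (2 * R) := fun y hy => by
    have hRy : dist y 0 < R := hR hy
    rw [mem_ball]
    linarith [dist_triangle y 0 x, dist_comm x 0]
  have hΩ0 : Ω ⊆ ball 0 (2 * R) :=
    hR.trans (ball_subset_ball (by linarith [dist_nonneg (x := x) (y := 0)]))
  have hsub : IntegrableOn (fun y => ‖x - y‖ ^ c) Ω μ :=
    integrableOn_norm_sub_rpow_of_subset_ball hdim hc hΩx
  have hnorm : IntegrableOn (fun y => ‖y‖ ^ c) Ω μ := by
    simpa using integrableOn_norm_sub_rpow_of_subset_ball hdim hc (μ := μ) hΩ0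
  have hnorm_le : ∫ y in Ω, ‖y‖ ^ c ∂μ ≤ I := by
    simpa using setIntegral_norm_sub_rpow_le_of_subset_ball hdim hc (μ := μ) hΩ0
  set A := infDist x Ωᶜ ^ s * (K * ‖x‖ ^ (a + b - c)) with hA
  have hle := fun y (hy : y ∈ Ω) => green_mul_martin_rpow_le (m := m) h0 hs hq ha hK hx hy
  have hdom : IntegrableOn (fun y => A * (‖x - y‖ ^ c + ‖y‖ ^ c)) Ω μ :=
    (hsub.add hnorm).const_mul A
  have hmeas : Measurable fun y => infDist y Ωᶜ := (continuous_infDist_pt _).measurable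
  have hint : IntegrableOn (fun y => min (‖x - y‖ ^ m)
      (infDist x Ωᶜ ^ s * infDist y Ωᶜ ^ s * ‖x - y‖ ^ b) *
        (infDist y Ωᶜ ^ s * ‖y‖ ^ b) ^ q) Ω μ := by
    refine hdom.mono' (by fun_prop) ((ae_restrict_iff' hΩm).2 (ae_of_all _ fun y hy => ?_))
    rw [norm_of_nonneg (green_mul_martin_rpow_nonneg Ω m s b q x y)]
    exact hle y hy
  refine ⟨hint, ?_⟩
  calc _ ≤ ∫ y in Ω, A * (‖x - y‖ ^ c + ‖y‖ ^ c) ∂μ :=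
        setIntegral_mono_on hint hdom hΩm hle
    _ = A * (∫ y in Ω, ‖x - y‖ ^ c ∂μ + ∫ y in Ω, ‖y‖ ^ c ∂μ) := by
        rw [integral_const_mul, integral_add hsub hnorm]
    _ ≤ A * (I + I) := by
        have hA0 : 0 ≤ A := mul_nonneg (rpow_nonneg infDist_nonneg _)
          (mul_nonneg hK0 (rpow_nonneg hx0.le _))
        gcongr
        exact setIntegral_norm_sub_rpow_le_of_subset_ball hdim hc hΩx
    _ = K * (2 * I) * ‖x‖ ^ (a - c) * (infDist x Ωᶜ ^ s * ‖x‖ ^ b) := by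
        rw [hA, show a + b - c = (a - c) + b by ring, rpow_add hx0]
        ring

end Potential

theorem stmt_15_general {N : ℕ} (hN : 3 ≤ N)
    (Ω : Set (EuclideanSpace ℝ (Fin N))) (hΩo : IsOpen Ω) (hΩb : Bornology.IsBounded Ω)
    (h0 : (0 : EuclideanSpace ℝ (Fin N)) ∈ frontier Ω)
    (κ α q : ℝ) (hκ0 : 0 < κ)
    (hα : α = 1 + Real.sqrt (1 - 4 * κ))
    (hq : 1 < q) (hqc : q < ((N : ℝ) + α / 2) / ((N : ℝ) - 2 + α / 2)) :
    (∀ x ∈ Ω,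
      IntegrableOn
        (fun y =>
          min (‖x - y‖ ^ ((2 : ℝ) - N))
              ((Metric.infDist x Ωᶜ) ^ (α / 2) * (Metric.infDist y Ωᶜ) ^ (α / 2)
                * ‖x - y‖ ^ ((2 : ℝ) - N - α))
            * ((Metric.infDist y Ωᶜ) ^ (α / 2) * ‖y‖ ^ ((2 : ℝ) - N - α)) ^ q)
        Ω volume) ∧
    ∀ ε : ℝ, 0 < ε → ∃ δ : ℝ, 0 < δ ∧
      ∀ x ∈ Ω, ‖x‖ < δ →
        (∫ y in Ω,
            min (‖x - y‖ ^ ((2 : ℝ) - N))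
                ((Metric.infDist x Ωᶜ) ^ (α / 2) * (Metric.infDist y Ωᶜ) ^ (α / 2)
                  * ‖x - y‖ ^ ((2 : ℝ) - N - α))
              * ((Metric.infDist y Ωᶜ) ^ (α / 2) * ‖y‖ ^ ((2 : ℝ) - N - α)) ^ q) ≤
          ε * ((Metric.infDist x Ωᶜ) ^ (α / 2) * ‖x‖ ^ ((2 : ℝ) - N - α)) := by
  have hN' : (3 : ℝ) ≤ N := by exact_mod_cast hN
  have hα1 : 1 ≤ α := by rw [hα]; linarith [Real.sqrt_nonneg (1 - 4 * κ)]
  have hα2 : α < 2 := hα ▸ one_add_sqrt_one_sub_mul_lt_two hκ0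
  set b : ℝ := 2 - N - α
  set a : ℝ := α / 2 + α / 2 * q + b * q with ha
  have haN : -(N : ℝ) < a := by
    rw [lt_div_iff₀ (by linarith)] at hqc
    linarith
  have ha0 : a < 0 := by
    linarith [mul_lt_mul_of_pos_right hq (by linarith : (0 : ℝ) < N - 2 + α / 2)]
  obtain ⟨c, hc_lo, hc_hi⟩ : ∃ c, max (-(N : ℝ)) (a + b) < c ∧ c < min a b :=
    exists_between (max_lt (lt_min haN (by linarith)) (lt_min (by linarith) (by linarith)))
  rw [max_lt_iff] at hc_lo
  rw [lt_min_iff] at hc_hi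
  have h0Ω : (0 : EuclideanSpace ℝ (Fin N)) ∉ Ω := by
    rw [hΩo.frontier_eq] at h0
    exact h0.2
  obtain ⟨M, hM⟩ := exists_setIntegral_green_mul_martin_rpow_le (μ := volume) (m := 2 - N)
    (by rw [finrank_euclideanSpace_fin]; omega) hΩo.measurableSet hΩb h0Ω (by linarith)
    (by linarith) ha.symm (by rw [finrank_euclideanSpace_fin]; exact hc_lo.1) hc_lo.2
    hc_hi.1.le hc_hi.2.le
  refine ⟨fun x hx => (hM x hx).1, fun ε hε => ?_⟩
  obtain ⟨δ, hδ, hδε⟩ := exists_pos_forall_mul_rpow_le M (sub_pos.2 hc_hi.1) hε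
  refine ⟨δ, hδ, fun x hx hxδ => (hM x hx).2.trans ?_⟩
  gcongr
  · exact mul_nonneg (rpow_nonneg infDist_nonneg _) (rpow_nonneg (norm_nonneg _) _)
  · exact hδε ‖x‖ (norm_nonneg x) hxδ

/-- in the subcritical range `1 < q < q_c`, the Green potential of the
`q`-th power of the Martin-kernel comparison expression
`K̃(x) = d(x)^{α/2} |x|^{2-N-α}` (pole at `0 ∈ ∂Ω`) is finite and is `o(K̃(x))` as
`x → 0` in `Ω`, where
`G̃(x,y) = min{|x-y|^{2-N}, d(x)^{α/2} d(y)^{α/2} |x-y|^{2-N-α}}`. -/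
theorem stmt_15 {N : ℕ} (hN : 3 ≤ N)
    (Ω : Set (EuclideanSpace ℝ (Fin N))) (hΩo : IsOpen Ω) (hΩb : Bornology.IsBounded Ω)
    (h0 : (0 : EuclideanSpace ℝ (Fin N)) ∈ frontier Ω)
    (κ α q : ℝ) (hκ0 : 0 < κ) (hκ1 : κ ≤ 1 / 4)
    (hα : α = 1 + Real.sqrt (1 - 4 * κ))
    (hq : 1 < q) (hqc : q < ((N : ℝ) + α / 2) / ((N : ℝ) - 2 + α / 2)) :
    (∀ x ∈ Ω,
      IntegrableOn
        (fun y =>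
          min (‖x - y‖ ^ ((2 : ℝ) - N))
              ((Metric.infDist x Ωᶜ) ^ (α / 2) * (Metric.infDist y Ωᶜ) ^ (α / 2)
                * ‖x - y‖ ^ ((2 : ℝ) - N - α))
            * ((Metric.infDist y Ωᶜ) ^ (α / 2) * ‖y‖ ^ ((2 : ℝ) - N - α)) ^ q)
        Ω volume) ∧
    ∀ ε : ℝ, 0 < ε → ∃ δ : ℝ, 0 < δ ∧
      ∀ x ∈ Ω, ‖x‖ < δ →
        (∫ y in Ω,
            min (‖x - y‖ ^ ((2 : ℝ) - N))
                ((Metric.infDist x Ωᶜ) ^ (α / 2) * (Metric.infDist y Ωᶜ) ^ (α / 2)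
                  * ‖x - y‖ ^ ((2 : ℝ) - N - α))
              * ((Metric.infDist y Ωᶜ) ^ (α / 2) * ‖y‖ ^ ((2 : ℝ) - N - α)) ^ q) ≤
          ε * ((Metric.infDist x Ωᶜ) ^ (α / 2) * ‖x‖ ^ ((2 : ℝ) - N - α)) :=
  stmt_15_general hN Ω hΩo hΩb h0 κ α q hκ0 hα hq hqc
end
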